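/- arXiv:2201.04443 — 8 statements merged into one kernel-verified Lean document; each statement's English description precedes it below -/
import Mathlib

section
/- Fix integers n ≥ 4 and 2 ≤ k ≤ n−2. Let x_1, …, x_n be distinct positive real numbers, let A_n := [1 + x_i x_j]_{1≤i,j≤n}, let R_{n,k} be the n×n diagonal matrix whose last k diagonal entries equal 1 and all other entries equal 0, and set A_{n,k,ε} := A_n + ε R_{n,k}. Then there exists ε_0 > 0 such that for every 0 < ε < ε_0 there exists δ > 0 with the property: for every integer ℓ with n−k−1 ≤ ℓ ≤ n−3 and every real α ∈ [ℓ−δ, ℓ+δ], the entrywise power matrix A_{n,k,ε}^{∘α} := [((A_{n,k,ε})_{ij})^α] is positive semi-definite. -/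
/-- The `α`th Hadamard (entrywise) power of a real matrix, using the real power
function `Real.rpow` (so that `0 ^ 0 = 1`). -/
noncomputable def hadamardPower {n : ℕ} (A : Matrix (Fin n) (Fin n) ℝ) (α : ℝ) :
    Matrix (Fin n) (Fin n) ℝ :=
  Matrix.of fun i j => (A i j) ^ α

section Aux

open Matrix Finset

/-- The real quadratic form of a matrix as a double sum. -/
lemma quadForm_eq {n : ℕ} (M : Matrix (Fin n) (Fin n) ℝ) (v : Fin n → ℝ) :
    dotProduct (star v) (M *ᵥ v) = ∑ i, ∑ j, v i * M i j * v j := by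
  simp [dotProduct, mulVec, Finset.mul_sum, mul_assoc]

/-- Binomial expansion of `(1 + a*b)^ℓ`. -/
lemma one_add_mul_pow (a b : ℝ) (ℓ : ℕ) :
    (1 + a * b) ^ ℓ = ∑ r ∈ Finset.range (ℓ + 1), (ℓ.choose r : ℝ) * (a ^ r * b ^ r) := by
  rw [add_comm, add_pow]
  exact Finset.sum_congr rfl fun r _ => by rw [mul_pow]; ring

/-- Positive definiteness of the `ℓ`-th (natural) entrywise power of the perturbed matrix,
for `ℓ ≥ n - k - 1`. -/
lemma pd_nat_pow (n k : ℕ) (hk : 2 ≤ k) (hkn : k + 2 ≤ n) (x : Fin n → ℝ)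
    (hx : Function.Injective x) (hxpos : ∀ i, 0 < x i) (ε : ℝ) (hε : 0 < ε)
    (ℓ : ℕ) (hℓ : n - k - 1 ≤ ℓ) :
    (Matrix.of fun i j : Fin n =>
      ((1 + x i * x j) + ε * (if i = j ∧ n - k ≤ (i : ℕ) then 1 else 0)) ^ ℓ).PosDef := by
  have hm2 : 2 ≤ n - k := by omega
  have hℓ0 : ℓ ≠ 0 := by omega
  set m : ℕ := n - k with hm
  have hmn : m ≤ n := Nat.sub_le n k
  -- the diagonal perturbation
  set c : Fin n → ℝ := fun i =>
    if m ≤ (i : ℕ) then (1 + x i * x i + ε) ^ ℓ - (1 + x i * x i) ^ ℓ else 0 with hc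
  have hc_nonneg : ∀ i, 0 ≤ c i := by
    intro i
    simp only [hc]
    split_ifs
    · have h1 : (0:ℝ) ≤ 1 + x i * x i := by nlinarith [hxpos i]
      have := pow_lt_pow_left₀ (by linarith : 1 + x i * x i < 1 + x i * x i + ε) h1 hℓ0
      linarith
    · exact le_rfl
  have hc_pos : ∀ i : Fin n, m ≤ (i : ℕ) → 0 < c i := by
    intro i hi
    simp only [hc, if_pos hi]
    have h1 : (0:ℝ) ≤ 1 + x i * x i := by nlinarith [hxpos i]
    have := pow_lt_pow_left₀ (by linarith : 1 + x i * x i < 1 + x i * x i + ε) h1 hℓ0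
    linarith
  -- entrywise decomposition
  have key : ∀ i j : Fin n,
      ((1 + x i * x j) + ε * (if i = j ∧ m ≤ (i : ℕ) then 1 else 0)) ^ ℓ
        = (∑ r ∈ Finset.range (ℓ + 1), (ℓ.choose r : ℝ) * (x i ^ r * x j ^ r))
          + (if i = j then c i else 0) := by
    intro i j
    rcases eq_or_ne i j with hij | hij
    · subst hij
      by_cases hi : m ≤ (i : ℕ)
      · rw [if_pos ⟨rfl, hi⟩, if_pos rfl]
        simp only [hc, if_pos hi]
        rw [← one_add_mul_pow (x i) (x i) ℓ]
        ring
      · rw [if_neg (by tauto), if_pos rfl]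
        simp only [hc, if_neg hi]
        rw [← one_add_mul_pow (x i) (x i) ℓ]
        ring
    · rw [if_neg (by tauto), if_neg hij, mul_zero, add_zero, add_zero,
        one_add_mul_pow]
  refine Matrix.PosDef.of_dotProduct_mulVec_pos ?_ ?_
  · -- Hermitian
    ext i j
    simp only [conjTranspose_apply, of_apply, star_trivial]
    rw [key j i, key i j]
    have : (if j = i then c j else 0) = (if i = j then c i else 0) := by
      rcases eq_or_ne i j with h | h
      · subst h; rfl
      · rw [if_neg h, if_neg (Ne.symm h)]
    rw [this]
    congr 1
    exact Finset.sum_congr rfl fun r _ => by ring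
  · -- positivity
    intro v hv
    rw [quadForm_eq]
    simp only [of_apply]
    have expand : ∑ i, ∑ j, v i *
          (((1 + x i * x j) + ε * (if i = j ∧ m ≤ (i : ℕ) then 1 else 0)) ^ ℓ) * v j
        = (∑ r ∈ Finset.range (ℓ + 1),
            (ℓ.choose r : ℝ) * (∑ i, v i * x i ^ r) ^ 2) + ∑ i, c i * v i ^ 2 := by
      simp_rw [key]
      have step0 : ∀ i : Fin n, ∑ j, v i *
            ((∑ r ∈ Finset.range (ℓ + 1), (ℓ.choose r : ℝ) * (x i ^ r * x j ^ r))
              + (if i = j then c i else 0)) * v j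
          = (∑ j, v i * (∑ r ∈ Finset.range (ℓ + 1),
              (ℓ.choose r : ℝ) * (x i ^ r * x j ^ r)) * v j) + c i * v i ^ 2 := by
        intro i
        have : ∀ j : Fin n, v i *
            ((∑ r ∈ Finset.range (ℓ + 1), (ℓ.choose r : ℝ) * (x i ^ r * x j ^ r))
              + (if i = j then c i else 0)) * v j
            = v i * (∑ r ∈ Finset.range (ℓ + 1),
                (ℓ.choose r : ℝ) * (x i ^ r * x j ^ r)) * v j
              + (if i = j then c i * v i * v j else 0) := by
          intro j
          rcases eq_or_ne i j with h | h
          · subst h; rw [if_pos rfl, if_pos rfl]; ring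
          · rw [if_neg h, if_neg h]; ring
        rw [Finset.sum_congr rfl fun j _ => this j, Finset.sum_add_distrib,
          Finset.sum_ite_eq (Finset.univ : Finset (Fin n)) i (fun j => c i * v i * v j)]
        simp [sq, mul_assoc]
      rw [Finset.sum_congr rfl fun i _ => step0 i, Finset.sum_add_distrib]
      congr 1
      · -- sum exchange
        calc ∑ i, ∑ j, v i * (∑ r ∈ Finset.range (ℓ + 1),
              (ℓ.choose r : ℝ) * (x i ^ r * x j ^ r)) * v j
            = ∑ i, ∑ j, ∑ r ∈ Finset.range (ℓ + 1),
                (ℓ.choose r : ℝ) * ((v i * x i ^ r) * (v j * x j ^ r)) := by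
              refine Finset.sum_congr rfl fun i _ => Finset.sum_congr rfl fun j _ => ?_
              rw [Finset.mul_sum, Finset.sum_mul]
              exact Finset.sum_congr rfl fun r _ => by ring
          _ = ∑ i, ∑ r ∈ Finset.range (ℓ + 1), ∑ j,
                (ℓ.choose r : ℝ) * ((v i * x i ^ r) * (v j * x j ^ r)) :=
              Finset.sum_congr rfl fun i _ => Finset.sum_comm
          _ = ∑ r ∈ Finset.range (ℓ + 1), ∑ i, ∑ j,
                (ℓ.choose r : ℝ) * ((v i * x i ^ r) * (v j * x j ^ r)) :=
              Finset.sum_comm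
          _ = ∑ r ∈ Finset.range (ℓ + 1),
                (ℓ.choose r : ℝ) * (∑ i, v i * x i ^ r) ^ 2 := by
              refine Finset.sum_congr rfl fun r _ => ?_
              rw [sq, Finset.sum_mul_sum, Finset.mul_sum]
              exact Finset.sum_congr rfl fun i _ => by rw [Finset.mul_sum]
    rw [expand]
    have h1 : ∀ r ∈ Finset.range (ℓ + 1),
        (0:ℝ) ≤ (ℓ.choose r : ℝ) * (∑ i, v i * x i ^ r) ^ 2 := fun r _ =>
      mul_nonneg (Nat.cast_nonneg _) (sq_nonneg _)
    have h2 : ∀ i ∈ (Finset.univ : Finset (Fin n)), (0:ℝ) ≤ c i * v i ^ 2 := fun i _ =>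
      mul_nonneg (hc_nonneg i) (sq_nonneg _)
    have hA : 0 ≤ ∑ r ∈ Finset.range (ℓ + 1), (ℓ.choose r : ℝ) * (∑ i, v i * x i ^ r) ^ 2 :=
      Finset.sum_nonneg h1
    have hB : 0 ≤ ∑ i, c i * v i ^ 2 := Finset.sum_nonneg h2
    rcases lt_or_eq_of_le (add_nonneg hA hB) with hlt | heq
    · exact hlt
    · -- derive a contradiction: v must be 0
      exfalso
      have hAz : ∑ r ∈ Finset.range (ℓ + 1), (ℓ.choose r : ℝ) * (∑ i, v i * x i ^ r) ^ 2 = 0 := by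
        linarith
      have hBz : ∑ i, c i * v i ^ 2 = 0 := by linarith
      have hS : ∀ r ∈ Finset.range (ℓ + 1), (∑ i, v i * x i ^ r) = 0 := by
        intro r hr
        have := (Finset.sum_eq_zero_iff_of_nonneg h1).mp hAz r hr
        have hcr : (0:ℝ) < (ℓ.choose r : ℝ) := by
          have : 0 < ℓ.choose r := Nat.choose_pos (by
            simpa using Nat.lt_succ_iff.mp (Finset.mem_range.mp hr))
          exact_mod_cast this
        have hsq : (∑ i, v i * x i ^ r) ^ 2 = 0 := by
          rcases mul_eq_zero.mp this with h | h
          · exact absurd h hcr.ne'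
          · exact h
        exact pow_eq_zero_iff two_ne_zero |>.mp hsq
      have hvtail : ∀ i : Fin n, m ≤ (i : ℕ) → v i = 0 := by
        intro i hi
        have := (Finset.sum_eq_zero_iff_of_nonneg h2).mp hBz i (Finset.mem_univ i)
        rcases mul_eq_zero.mp this with h | h
        · exact absurd h (hc_pos i hi).ne'
        · exact pow_eq_zero_iff two_ne_zero |>.mp h
      -- Vandermonde argument on the first `m` coordinates
      set w : Fin m → ℝ := fun j => v (Fin.castLE hmn j) with hw
      have hsum_restrict : ∀ r : ℕ,
          ∑ j : Fin m, w j * (x (Fin.castLE hmn j)) ^ r = ∑ i : Fin n, v i * x i ^ r := by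
        intro r
        have hmap : ∑ j : Fin m, w j * (x (Fin.castLE hmn j)) ^ r
            = ∑ i ∈ (Finset.univ.map (Fin.castLEEmb hmn)), v i * x i ^ r := by
          exact (Finset.sum_map (Finset.univ : Finset (Fin m)) (Fin.castLEEmb hmn)
            (fun i => v i * x i ^ r)).symm
        rw [hmap]
        refine Finset.sum_subset (Finset.subset_univ _) ?_
        intro i _ hi
        have : ¬ (i : ℕ) < m := by
          intro hlt
          exact hi (Finset.mem_map.mpr ⟨⟨(i : ℕ), hlt⟩, Finset.mem_univ _, Fin.ext rfl⟩)
        rw [hvtail i (le_of_not_gt this), zero_mul]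
      have hw0 : w = 0 := by
        apply Matrix.eq_zero_of_forall_pow_sum_mul_pow_eq_zero
          (f := fun j : Fin m => x (Fin.castLE hmn j))
          (hx.comp (Fin.castLE_injective hmn))
        intro r
        rw [hsum_restrict (r : ℕ)]
        exact hS (r : ℕ) (Finset.mem_range.mpr (by omega))
      apply hv
      funext i
      rcases lt_or_ge (i : ℕ) m with hi | hi
      · have : w ⟨(i : ℕ), hi⟩ = 0 := by rw [hw0]; rfl
        simpa [hw, Fin.ext_iff] using this
      · exact hvtail i hi

/-- Positive definiteness is open along a continuous family of Hermitian matrices. -/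
lemma exists_delta_posSemidef {n : ℕ} (f : ℝ → Matrix (Fin n) (Fin n) ℝ)
    (hcont : ∀ i j, Continuous fun α => f α i j)
    (hherm : ∀ α, (f α).IsHermitian) (t : ℝ) (hpd : (f t).PosDef) :
    ∃ δ > (0:ℝ), ∀ α, |α - t| ≤ δ → (f α).PosSemidef := by
  set g : ℝ × EuclideanSpace ℝ (Fin n) → ℝ :=
    fun p => ∑ i, ∑ j, p.2 i * f p.1 i j * p.2 j with hg
  have heval : ∀ i : Fin n, Continuous fun p : ℝ × EuclideanSpace ℝ (Fin n) => p.2 i :=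
    fun i => (continuous_apply i).comp
      ((PiLp.continuous_ofLp (p := 2) (β := fun _ : Fin n => ℝ)).comp continuous_snd)
  have hgc : Continuous g := by
    apply continuous_finset_sum; intro i _
    apply continuous_finset_sum; intro j _
    exact ((heval i).mul ((hcont i j).comp continuous_fst)).mul (heval j)
  have hU : IsOpen (g ⁻¹' Set.Ioi 0) := isOpen_Ioi.preimage hgc
  have hsub : ({t} : Set ℝ) ×ˢ Metric.sphere (0 : EuclideanSpace ℝ (Fin n)) 1
      ⊆ g ⁻¹' Set.Ioi 0 := by
    rintro ⟨a, y⟩ ⟨ha, hy⟩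
    simp only [Set.mem_singleton_iff] at ha
    subst ha
    have hy1 : ‖y‖ = 1 := mem_sphere_zero_iff_norm.mp hy
    have hy0 : (fun i => y i : Fin n → ℝ) ≠ 0 := by
      intro h
      have : y = 0 := by
        ext i
        exact congrFun h i
      rw [this] at hy1
      simp at hy1
    have := hpd.dotProduct_mulVec_pos hy0
    rw [quadForm_eq] at this
    exact Set.mem_preimage.mpr this
  obtain ⟨u, w, hu, _, htu, hsw, huw⟩ := generalized_tube_lemma isCompact_singleton
    (isCompact_sphere (0 : EuclideanSpace ℝ (Fin n)) 1) hU hsub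
  obtain ⟨δ0, hδ0, hball⟩ := Metric.isOpen_iff.mp hu t (htu rfl)
  refine ⟨δ0 / 2, by linarith, fun α hα => ?_⟩
  have hαu : α ∈ u := hball (by rw [Metric.mem_ball, Real.dist_eq]; linarith [abs_nonneg (α - t)])
  refine Matrix.PosSemidef.of_dotProduct_mulVec_nonneg (hherm α) fun v => ?_
  rw [quadForm_eq]
  by_cases hv : v = 0
  · simp [hv]
  · set y0 : EuclideanSpace ℝ (Fin n) := (WithLp.equiv 2 (Fin n → ℝ)).symm v with hy0
    have hy00 : y0 ≠ 0 := by
      intro h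
      apply hv
      funext i
      exact congrFun (congrArg (WithLp.equiv 2 (Fin n → ℝ)) h) i
    have hnpos : 0 < ‖y0‖ := norm_pos_iff.mpr hy00
    set cc : ℝ := ‖y0‖⁻¹ with hcc
    have hccpos : 0 < cc := inv_pos.mpr hnpos
    have hys : cc • y0 ∈ Metric.sphere (0 : EuclideanSpace ℝ (Fin n)) 1 := by
      rw [mem_sphere_zero_iff_norm, norm_smul, Real.norm_eq_abs, abs_of_pos hccpos, hcc,
        inv_mul_cancel₀ hnpos.ne']
    have hgpos : 0 < g (α, cc • y0) := huw ⟨hαu, hsw hys⟩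
    have hentry : ∀ i : Fin n, (cc • y0) i = cc * v i := fun i => rfl
    have hgval : g (α, cc • y0) = cc ^ 2 * ∑ i, ∑ j, v i * f α i j * v j := by
      simp only [hg]
      calc ∑ i, ∑ j, (cc • y0) i * f α i j * (cc • y0) j
          = ∑ i, ∑ j, cc ^ 2 * (v i * f α i j * v j) := by
            refine Finset.sum_congr rfl fun i _ => Finset.sum_congr rfl fun j _ => ?_
            rw [hentry i, hentry j]; ring
        _ = cc ^ 2 * ∑ i, ∑ j, v i * f α i j * v j := by
            rw [Finset.mul_sum]
            exact Finset.sum_congr rfl fun i _ => (Finset.mul_sum _ _ _).symm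
    rw [hgval] at hgpos
    nlinarith [sq_nonneg cc, hgpos]

end Aux

/-- `A_{n,k,ε} = [1 + x_i x_j] + ε R_{n,k}` where `R_{n,k}` has `1` in the last `k`
diagonal entries and `0` elsewhere. For every small enough `ε > 0` there is `δ > 0`
such that for every integer `ℓ` with `n-k-1 ≤ ℓ ≤ n-3` and every `α ∈ [ℓ-δ, ℓ+δ]`,
the `α`th Hadamard power of `A_{n,k,ε}` is positive semi-definite. -/
theorem hadamard_power_psd_near_integers (n k : ℕ) (hn : 4 ≤ n) (hk : 2 ≤ k)
    (hkn : k + 2 ≤ n) (x : Fin n → ℝ) (hx : Function.Injective x)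
    (hxpos : ∀ i, 0 < x i) :
    ∃ ε₀ > (0 : ℝ), ∀ ε : ℝ, 0 < ε → ε < ε₀ →
      ∃ δ > (0 : ℝ), ∀ ℓ : ℕ, n - k - 1 ≤ ℓ → ℓ + 3 ≤ n →
        ∀ α : ℝ, (ℓ : ℝ) - δ ≤ α → α ≤ (ℓ : ℝ) + δ →
          (hadamardPower
            (Matrix.of fun i j : Fin n =>
              (1 + x i * x j) + ε * (if i = j ∧ n - k ≤ (i : ℕ) then 1 else 0))
            α).PosSemidef := by
  refine ⟨1, one_pos, fun ε hε _ => ?_⟩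
  set B : Matrix (Fin n) (Fin n) ℝ := Matrix.of fun i j : Fin n =>
    (1 + x i * x j) + ε * (if i = j ∧ n - k ≤ (i : ℕ) then 1 else 0) with hB
  have hBpos : ∀ i j, 0 < B i j := by
    intro i j
    have hxx : 0 < x i * x j := mul_pos (hxpos i) (hxpos j)
    have h01 : (0:ℝ) ≤ (if i = j ∧ n - k ≤ (i : ℕ) then 1 else 0) := by
      split_ifs <;> norm_num
    have := mul_nonneg hε.le h01
    simp only [hB, Matrix.of_apply]
    linarith
  have hBsymm : ∀ i j, B i j = B j i := by
    intro i j
    simp only [hB, Matrix.of_apply]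
    have : (if i = j ∧ n - k ≤ (i : ℕ) then (1:ℝ) else 0)
        = (if j = i ∧ n - k ≤ (j : ℕ) then (1:ℝ) else 0) := by
      rcases eq_or_ne i j with h | h
      · subst h; rfl
      · rw [if_neg (by tauto), if_neg (by tauto)]
    rw [this]
    ring_nf
  have hcont : ∀ i j, Continuous fun α : ℝ => hadamardPower B α i j := by
    intro i j
    simp only [hadamardPower, Matrix.of_apply]
    exact continuous_iff_continuousAt.mpr fun a =>
      Real.continuousAt_const_rpow (hBpos i j).ne'
  have hherm : ∀ α : ℝ, (hadamardPower B α).IsHermitian := by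
    intro α
    ext i j
    simp only [Matrix.conjTranspose_apply, hadamardPower, Matrix.of_apply, star_trivial]
    rw [hBsymm j i]
  -- for each relevant ℓ there is a δ
  have H : ∀ ℓ : ℕ, ∃ δ > (0:ℝ), n - k - 1 ≤ ℓ →
      ∀ α : ℝ, |α - (ℓ:ℝ)| ≤ δ → (hadamardPower B α).PosSemidef := by
    intro ℓ
    by_cases hℓ : n - k - 1 ≤ ℓ
    · have hpd : (hadamardPower B (ℓ : ℝ)).PosDef := by
        have heq : hadamardPower B (ℓ : ℝ) = Matrix.of fun i j : Fin n =>
            ((1 + x i * x j) + ε * (if i = j ∧ n - k ≤ (i : ℕ) then 1 else 0)) ^ ℓ := by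
          ext i j
          simp only [hadamardPower, Matrix.of_apply]
          exact Real.rpow_natCast _ ℓ
        rw [heq]
        exact pd_nat_pow n k hk hkn x hx hxpos ε hε ℓ hℓ
      obtain ⟨δ, hδ, hP⟩ := exists_delta_posSemidef (fun α => hadamardPower B α)
        hcont hherm (ℓ : ℝ) hpd
      exact ⟨δ, hδ, fun _ => hP⟩
    · exact ⟨1, one_pos, fun h => absurd h hℓ⟩
  choose δf hδf hPf using H
  have hTne : (Finset.Icc (n - k - 1) (n - 3)).Nonempty :=
    ⟨n - k - 1, Finset.mem_Icc.mpr ⟨le_refl _, by omega⟩⟩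
  refine ⟨(Finset.Icc (n - k - 1) (n - 3)).inf' hTne δf, ?_, ?_⟩
  · exact (Finset.lt_inf'_iff hTne).mpr fun ℓ _ => hδf ℓ
  · intro ℓ hℓ1 hℓ2 α hα1 hα2
    have hmem : ℓ ∈ Finset.Icc (n - k - 1) (n - 3) := Finset.mem_Icc.mpr ⟨hℓ1, by omega⟩
    have hle : (Finset.Icc (n - k - 1) (n - 3)).inf' hTne δf ≤ δf ℓ :=
      Finset.inf'_le δf hmem
    exact hPf ℓ hℓ1 α (abs_le.mpr ⟨by linarith, by linarith⟩)
end

section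
/- Fix integers n ≥ 4 and 2 ≤ k ≤ n−2. Let x_1, …, x_n be distinct positive real numbers, let A_n := [1 + x_i x_j]_{1≤i,j≤n}, let R_{n,k} be the n×n diagonal matrix whose last k diagonal entries equal 1 and all other entries equal 0, and set A_{n,k,ε} := A_n + ε R_{n,k} for ε > 0. Then for every α ∈ [0, n−k−2], the entrywise power matrix A_{n,k,ε}^{∘α} is positive semi-definite if and only if α is an integer. -/
open Set Function Filter Topology Matrix Asymptotics Polynomial

theorem hasDerivAt_one_add_mul_rpow_mul_rpow_neg {a b β u : ℝ} (ha : 0 < 1 + u * a)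
    (hb : 0 < 1 + u * b) :
    HasDerivAt (fun u => (1 + u * a) ^ β * (1 + u * b) ^ (-β))
      (β * (a - b) * (1 + u * a) ^ (β - 1) * (1 + u * b) ^ (-β - 1)) u := by
  have hlin : ∀ c : ℝ, HasDerivAt (fun u => 1 + u * c) c u := fun c => by
    simpa using ((hasDerivAt_id u).mul_const c).const_add 1
  refine (((hlin a).rpow_const (p := β) (.inl ha.ne')).mul
    ((hlin b).rpow_const (p := -β) (.inl hb.ne'))).congr_deriv ?_
  have ea : (1 + u * a) ^ β = (1 + u * a) ^ (β - 1) * (1 + u * a) := by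
    rw [← Real.rpow_add_one ha.ne', sub_add_cancel]
  have eb : (1 + u * b) ^ (-β) = (1 + u * b) ^ (-β - 1) * (1 + u * b) := by
    rw [← Real.rpow_add_one hb.ne', sub_add_cancel]
  rw [ea, eb]
  ring

theorem exists_strictMono_deriv_eq_zero_of_eq_zero {p : ℕ} {f f' : ℝ → ℝ}
    {s : Fin (p + 1) → ℝ} (hs : StrictMono s)
    (hf : ∀ u ∈ Icc (s 0) (s (Fin.last p)), HasDerivAt f (f' u) u) (hzero : ∀ i, f (s i) = 0) :
    ∃ ξ : Fin p → ℝ, StrictMono ξ ∧ ∀ i, s i.castSucc < ξ i ∧ f' (ξ i) = 0 := by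
  have hsub : ∀ i : Fin p, Icc (s i.castSucc) (s i.succ) ⊆ Icc (s 0) (s (Fin.last p)) :=
    fun i => Icc_subset_Icc (hs.monotone (Fin.zero_le _)) (hs.monotone (Fin.le_last _))
  have rolle : ∀ i : Fin p, ∃ ξ ∈ Ioo (s i.castSucc) (s i.succ), f' ξ = 0 := fun i =>
    exists_hasDerivAt_eq_zero (hs Fin.castSucc_lt_succ)
      (fun u hu => (hf u (hsub i hu)).continuousAt.continuousWithinAt)
      (by rw [hzero, hzero]) fun u hu => hf u (hsub i (Ioo_subset_Icc_self hu))
  choose ξ hξ hξ0 using rolle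
  refine ⟨ξ, fun i j hij => ?_, fun i => ⟨(hξ i).1, hξ0 i⟩⟩
  calc ξ i < s i.succ := (hξ i).2
    _ ≤ s j.castSucc := hs.monotone (Fin.succ_le_castSucc_iff.2 hij)
    _ < ξ j := (hξ j).1

theorem eq_zero_of_sum_mul_one_add_mul_rpow_eq_zero {p : ℕ} {β : ℝ}
    (hβ : ∀ m : ℤ, β ≠ m) {x : Fin p → ℝ} (hx : Injective x) (hx0 : ∀ j, 0 ≤ x j)
    {s : Fin p → ℝ} (hs : StrictMono s) (hs0 : ∀ i, 0 ≤ s i) {c : Fin p → ℝ}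
    (hc : ∀ i, ∑ j, c j * (1 + s i * x j) ^ β = 0) : c = 0 := by
  induction p generalizing β with
  | zero => exact funext (·.elim0)
  | succ p ih =>
    set L := Fin.last p
    have hbase : ∀ u, 0 ≤ u → ∀ j, 0 < 1 + u * x j := fun u hu j => by
      have := mul_nonneg hu (hx0 j); linarith
    have hβ0 : β ≠ 0 := by exact_mod_cast hβ 0
    -- Dividing by `(1 + u * x L) ^ β` and differentiating kills the `L`-th term and leaves a
    -- combination of the same shape with exponent `β - 1`.
    have hderiv : ∀ u, 0 ≤ u →
        HasDerivAt (fun u => ∑ j, c j * ((1 + u * x j) ^ β * (1 + u * x L) ^ (-β)))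
          ((β * (1 + u * x L) ^ (-β - 1)) * ∑ j : Fin p,
            c j.castSucc * (x j.castSucc - x L) * (1 + u * x j.castSucc) ^ (β - 1)) u := by
      intro u hu
      refine (HasDerivAt.fun_sum fun j _ => ((hasDerivAt_one_add_mul_rpow_mul_rpow_neg
        (β := β) (hbase u hu j) (hbase u hu L)).const_mul (c j))).congr_deriv ?_
      rw [Fin.sum_univ_castSucc, Finset.mul_sum]
      simp only [L, sub_self, mul_zero, zero_mul, add_zero]
      exact Finset.sum_congr rfl fun j _ => by ring
    obtain ⟨ξ, hξ, hξs⟩ := exists_strictMono_deriv_eq_zero_of_eq_zero hs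
      (fun u hu => hderiv u ((hs0 0).trans hu.1)) fun i => by
        simp_rw [← mul_assoc, ← Finset.sum_mul, hc i, zero_mul]
    have hc' : ∀ j : Fin p, c j.castSucc = 0 := by
      have hβ' : ∀ m : ℤ, β - 1 ≠ m := fun m h => hβ (m + 1) (by push_cast; linarith)
      have hξ0 : ∀ i, 0 ≤ ξ i := fun i => ((hs0 _).trans_lt (hξs i).1).le
      have h := ih hβ' (hx.comp (Fin.castSucc_injective p)) (fun j => hx0 _) hξ hξ0
        (c := fun j => c j.castSucc * (x j.castSucc - x L)) fun i =>
          (mul_eq_zero.1 (hξs i).2).resolve_left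
            (mul_ne_zero hβ0 (Real.rpow_pos_of_pos (hbase _ (hξ0 i) L) _).ne')
      intro j
      have hxj : x j.castSucc - x L ≠ 0 :=
        sub_ne_zero.2 (hx.ne (Fin.castSucc_lt_last j).ne)
      exact (mul_eq_zero.1 (congrFun h j)).resolve_right hxj
    have hcL : c L = 0 := by
      have h := hc 0
      simp only [Fin.sum_univ_castSucc, hc', zero_mul, Finset.sum_const_zero, zero_add] at h
      exact (mul_eq_zero.1 h).resolve_right (Real.rpow_pos_of_pos (hbase _ (hs0 0) L) _).ne'
    exact funext fun j => Fin.lastCases hcL hc' j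

theorem isUnit_of_one_add_mul_rpow {p : ℕ} {β : ℝ} (hβ : ∀ m : ℤ, β ≠ m)
    {x s : Fin p → ℝ} (hx : Injective x) (hx0 : ∀ j, 0 ≤ x j) (hs : Injective s)
    (hs0 : ∀ i, 0 ≤ s i) :
    IsUnit (Matrix.of fun i j => (1 + s i * x j) ^ β) := by
  rw [Matrix.isUnit_iff_isUnit_det, isUnit_iff_ne_zero]
  intro hdet
  obtain ⟨c, hc0, hc⟩ := Matrix.exists_mulVec_eq_zero_iff.2 hdet
  refine hc0 (eq_zero_of_sum_mul_one_add_mul_rpow_eq_zero hβ hx hx0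
    ((Tuple.monotone_sort s).strictMono_of_injective (hs.comp (Tuple.sort s).injective))
    (fun i => hs0 _) fun i => ?_)
  simpa [Matrix.mulVec, dotProduct, mul_comm] using congrFun hc (Tuple.sort s i)

section PathOfMatrices

variable {X ι : Type*} [TopologicalSpace X] [Fintype ι]

theorem Continuous.eventually_posDef {M : X → Matrix ι ι ℝ} (hM : Continuous M)
    (hherm : ∀ x, (M x).IsHermitian) {x₀ : X} (h : (M x₀).PosDef) :
    ∀ᶠ x in 𝓝 x₀, (M x).PosDef := by
  have hF : Continuous fun y : X × (ι → ℝ) => y.2 ⬝ᵥ (M y.1 *ᵥ y.2) :=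
    continuous_snd.dotProduct ((hM.comp continuous_fst).matrix_mulVec continuous_snd)
  have hsphere :
      ∀ᶠ x in 𝓝 x₀, ∀ v ∈ Metric.sphere (0 : ι → ℝ) 1, 0 < v ⬝ᵥ (M x *ᵥ v) :=
    (isCompact_sphere 0 1).eventually_forall_of_forall_eventually fun v hv =>
      hF.continuousAt.eventually_const_lt <| by
        simpa using h.dotProduct_mulVec_pos (ne_zero_of_mem_sphere one_ne_zero ⟨v, hv⟩)
  filter_upwards [hsphere] with x hx
  refine PosDef.of_dotProduct_mulVec_pos (hherm x) fun w hw => ?_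
  have hw' : ‖w‖ ≠ 0 := norm_ne_zero_iff.2 hw
  have hu : ‖w‖⁻¹ • w ∈ Metric.sphere (0 : ι → ℝ) 1 := by
    simp [norm_smul, hw']
  have hc : 0 < ‖w‖⁻¹ := by positivity
  have := hx _ hu
  rw [smul_dotProduct, mulVec_smul, dotProduct_smul, smul_eq_mul, smul_eq_mul,
    mul_pos_iff_of_pos_left hc, mul_pos_iff_of_pos_left hc] at this
  rwa [star_trivial]

theorem posSemidef_of_isPreconnected [DecidableEq ι] {M : X → Matrix ι ι ℝ}
    (hM : Continuous M) (hherm : ∀ x, (M x).IsHermitian) {S : Set X} (hS : IsPreconnected S)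
    (hunit : ∀ x ∈ S, IsUnit (M x)) {a b : X} (ha : a ∈ S) (hb : b ∈ S)
    (hPSD : (M a).PosSemidef) : (M b).PosSemidef := by
  let U := {x | (M x).PosDef}
  let V := ⋃ v : ι → ℝ, {x | v ⬝ᵥ (M x *ᵥ v) < 0}
  have hU : IsOpen U := isOpen_iff_mem_nhds.2 fun x hx =>
    hM.eventually_posDef hherm hx
  have hV : IsOpen V := isOpen_iUnion fun v =>
    isOpen_lt (continuous_const.dotProduct (hM.matrix_mulVec continuous_const)) continuous_const
  have hUV : Disjoint U V := by
    refine Set.disjoint_left.2 fun x hx hxV => ?_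
    obtain ⟨v, hv⟩ := Set.mem_iUnion.1 hxV
    exact (hv : _ < _).not_ge (by simpa using hx.posSemidef.dotProduct_mulVec_nonneg v)
  have hPD : ∀ x ∈ S, (M x).PosSemidef → x ∈ U := fun x hx hx' =>
    (hx'.posDef_iff_isUnit).2 (hunit x hx)
  have hSUV : S ⊆ U ∪ V := by
    intro x hx
    by_cases hxV : x ∈ V
    · exact Or.inr hxV
    · refine Or.inl (hPD x hx (PosSemidef.of_dotProduct_mulVec_nonneg (hherm x) fun v => ?_))
      simpa using not_lt.1 fun h => hxV (Set.mem_iUnion.2 ⟨v, h⟩)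
  exact (hS.subset_left_of_subset_union hU hV hUV hSUV ⟨a, ha, hPD a ha hPSD⟩ hb).posSemidef

end PathOfMatrices

theorem isBigO_one_add_rpow_sub_sum (a : ℝ) (N : ℕ) :
    (fun u : ℝ => (1 + u) ^ a - ∑ m ∈ Finset.range N, Ring.choose a m * u ^ m) =O[𝓝 0]
      fun u => u ^ N := by
  have h := Real.one_add_rpow_hasFPowerSeriesAt_zero (a := a) |>.isBigO_sub_partialSum_pow N
  simp only [← norm_pow] at h
  simpa [FormalMultilinearSeries.partialSum, binomialSeries, mul_comm] using h.of_norm_right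

theorem isBigO_sum_one_add_mul_rpow_sub_sum {ι : Type*} [Fintype ι] (a : ℝ) (N : ℕ)
    (v z : ι → ℝ) :
    (fun t : ℝ => ∑ i, ∑ j, v i * v j * (1 + t * (z i * z j)) ^ a -
      ∑ m ∈ Finset.range N, Ring.choose a m * t ^ m * (∑ i, v i * z i ^ m) ^ 2) =O[𝓝 0]
      fun t => t ^ N := by
  have hpoly : ∀ t : ℝ, ∑ i, ∑ j, v i * v j *
      ∑ m ∈ Finset.range N, Ring.choose a m * (t * (z i * z j)) ^ m =
      ∑ m ∈ Finset.range N, Ring.choose a m * t ^ m * (∑ i, v i * z i ^ m) ^ 2 := fun t => by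
    simp_rw [sq, Finset.sum_mul_sum, Finset.mul_sum]
    rw [Finset.sum_comm (s := Finset.range N)]
    refine Finset.sum_congr rfl fun i _ => ?_
    rw [Finset.sum_comm (s := Finset.range N)]
    exact Finset.sum_congr rfl fun j _ => Finset.sum_congr rfl fun m _ => by ring
  simp only [← hpoly, ← Finset.sum_sub_distrib, ← mul_sub]
  refine IsBigO.fun_sum fun i _ => IsBigO.fun_sum fun j _ => IsBigO.const_mul_left ?_ _
  have hlin : Tendsto (fun t : ℝ => t * (z i * z j)) (𝓝 0) (𝓝 0) :=
    (continuous_mul_const _).tendsto' 0 0 (zero_mul _)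
  refine ((isBigO_one_add_rpow_sub_sum a N).comp_tendsto hlin).trans ?_
  exact (isBigO_const_mul_self ((z i * z j) ^ N) _ _).congr_left fun t => by
    simp only [Function.comp_def]; ring

theorem Ring.choose_neg_of_lt_of_lt {a : ℝ} {r : ℕ} (h₁ : (r : ℝ) < a) (h₂ : a < r + 1) :
    Ring.choose a (r + 2) < 0 := by
  rw [Ring.choose_eq_smul, smul_eq_mul, descPochhammer_smeval_eq_ascPochhammer,
    ascPochhammer_smeval_eq_eval, ascPochhammer_succ_left, eval_mul, eval_X, eval_comp, eval_add,
    eval_X, eval_one]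
  refine mul_neg_of_pos_of_neg (by positivity)
    (mul_neg_of_neg_of_pos ?_ (ascPochhammer_pos _ _ ?_))
  · push_cast; linarith
  · push_cast; linarith

theorem exists_sum_mul_pow_eq {p : ℕ} {z : Fin p → ℝ} (hz : Injective z) (w : Fin p → ℝ) :
    ∃ v : Fin p → ℝ, ∀ m : Fin p, ∑ j, v j * z j ^ (m : ℕ) = w m := by
  have hunit : IsUnit (vandermonde z) := by
    rw [isUnit_iff_isUnit_det, isUnit_iff_ne_zero]
    exact det_vandermonde_ne_zero_iff.2 hz
  obtain ⟨v, hv⟩ := vecMul_surjective_iff_isUnit.2 hunit w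
  exact ⟨v, fun m => by simpa [vecMul, dotProduct] using congrFun hv m⟩

theorem exists_eventually_sum_mul_one_add_mul_rpow_neg {r : ℕ} {a : ℝ} (h₁ : r < a)
    (h₂ : a < r + 1) {z : Fin (r + 3) → ℝ} (hz : Injective z) :
    ∃ v : Fin (r + 3) → ℝ,
      ∀ᶠ t in 𝓝[>] 0, ∑ i, ∑ j, v i * v j * (1 + t * (z i * z j)) ^ a < 0 := by
  obtain ⟨v, hv⟩ := exists_sum_mul_pow_eq hz fun m => if (m : ℕ) = r + 2 then 1 else 0
  set c := Ring.choose a (r + 2)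
  have hc : c < 0 := Ring.choose_neg_of_lt_of_lt h₁ h₂
  have hmain : ∀ t : ℝ, ∑ m ∈ Finset.range (r + 3), Ring.choose a m * t ^ m *
      (∑ i, v i * z i ^ m) ^ 2 = c * t ^ (r + 2) := fun t => by
    rw [Finset.sum_eq_single_of_mem (r + 2) (by simp) fun m hm hne => ?_]
    · have h := hv (Fin.last _)
      simp only [Fin.val_last, if_pos] at h
      rw [h, one_pow, mul_one]
    · simp [hv ⟨m, Finset.mem_range.1 hm⟩, hne]
  have ho := (isBigO_sum_one_add_mul_rpow_sub_sum a (r + 3) v z).trans_isLittleO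
    (isLittleO_pow_pow (𝕜 := ℝ) (Nat.lt_succ_self (r + 2)))
  simp only [hmain] at ho
  refine ⟨v, ?_⟩
  filter_upwards [nhdsWithin_le_nhds (ho.def (c := -c / 2) (by linarith)), self_mem_nhdsWithin]
    with t ht (htpos : 0 < t)
  have hT : 0 < t ^ (r + 2) := pow_pos htpos _
  rw [Real.norm_eq_abs, Real.norm_eq_abs, abs_of_pos hT] at ht
  have := (abs_le.1 ht).2
  nlinarith [mul_neg_of_neg_of_pos hc hT]

theorem not_posSemidef_one_add_mul_rpow {r : ℕ} {a : ℝ} (h₁ : r < a) (h₂ : a < r + 1)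
    {z : Fin (r + 3) → ℝ} (hz : Injective z) (hz0 : ∀ i, 0 ≤ z i) :
    ¬ (of fun i j => (1 + z i * z j) ^ a).PosSemidef := by
  intro hPSD
  have ha : ∀ m : ℤ, a ≠ m := by
    rintro m rfl
    have h₁' : (r : ℤ) < m := by exact_mod_cast h₁
    have h₂' : m < r + 1 := by exact_mod_cast h₂
    omega
  let N : ℝ → Matrix (Fin (r + 3)) (Fin (r + 3)) ℝ := fun t =>
    of fun i j => (1 + t * (z i * z j)) ^ a
  have hcont : Continuous N := continuous_matrix fun i j =>
    (Real.continuous_rpow_const (by linarith [r.cast_nonneg (α := ℝ)])).comp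
      (continuous_const.add (continuous_mul_const _))
  have hherm : ∀ t, (N t).IsHermitian := fun t =>
    IsHermitian.ext fun i j => by simp [N, mul_comm (z i)]
  have hunit : ∀ t ∈ Ioi (0 : ℝ), IsUnit (N t) := fun t (ht : 0 < t) => by
    convert isUnit_of_one_add_mul_rpow ha (x := fun j => t * z j)
      (fun i j h => hz (mul_left_cancel₀ ht.ne' h)) (fun j => mul_nonneg ht.le (hz0 j)) hz hz0
      using 3
    simp only [mul_left_comm]
  obtain ⟨v, hv⟩ := exists_eventually_sum_mul_one_add_mul_rpow_neg h₁ h₂ hz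
  obtain ⟨t, hneg, ht⟩ := (hv.and self_mem_nhdsWithin).exists
  have hNt := posSemidef_of_isPreconnected hcont hherm isPreconnected_Ioi hunit
    (mem_Ioi.2 one_pos) ht (by simpa [N] using hPSD)
  have := hNt.dotProduct_mulVec_nonneg v
  simp only [N, star_trivial, dotProduct, mulVec, of_apply, Finset.mul_sum] at this
  exact hneg.not_ge (this.trans_eq
    (Finset.sum_congr rfl fun i _ => Finset.sum_congr rfl fun j _ => by ring))

theorem Matrix.PosSemidef.map_pow {ι : Type*} [Fintype ι] {A : Matrix ι ι ℝ}
    (hA : A.PosSemidef) (m : ℕ) : (A.map (· ^ m)).PosSemidef := by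
  induction m with
  | zero =>
    convert posSemidef_vecMulVec_self_star (fun _ : ι => (1 : ℝ)) using 1
    ext i j; simp [vecMulVec]
  | succ m ih =>
    rw [show A.map (· ^ (m + 1)) = A.map (· ^ m) ⊙ A by ext; simp [pow_succ]]
    exact ih.hadamard hA

theorem posSemidef_vecMulVec_add_vecMulVec_add_diagonal {ι : Type*} [Fintype ι]
    [DecidableEq ι] (x d : ι → ℝ) (hd : 0 ≤ d) :
    (vecMulVec 1 (star 1) + vecMulVec x (star x) + diagonal d).PosSemidef :=
  ((posSemidef_vecMulVec_self_star _).add (posSemidef_vecMulVec_self_star _)).add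
    (PosSemidef.diagonal hd)

theorem hadamard_power_psd_iff_integer_on_initial_segment_general (n k : ℕ)
    (x : Fin n → ℝ) (hx : Function.Injective x)
    (hxpos : ∀ i, 0 < x i) (ε : ℝ) (hε : 0 < ε) :
    ∀ α : ℝ, 0 ≤ α → α ≤ (n : ℝ) - (k : ℝ) - 2 →
      ((hadamardPower
          (Matrix.of fun i j : Fin n =>
            (1 + x i * x j) + ε * (if i = j ∧ n - k ≤ (i : ℕ) then 1 else 0))
          α).PosSemidef ↔ ∃ m : ℕ, α = (m : ℝ)) := by
  intro α hα0 hαn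
  constructor
  · intro hPSD
    by_contra! hα
    set r := ⌊α⌋₊
    have h₁ : (r : ℝ) < α := (Nat.floor_le hα0).lt_of_ne (hα r).symm
    have h₂ : α < r + 1 := Nat.lt_floor_add_one α
    have hr : r + 3 ≤ n - k := by
      have : r + k + 2 < n := by exact_mod_cast (by linarith : (r : ℝ) + k + 2 < n)
      omega
    let e : Fin (r + 3) → Fin n := Fin.castLE (hr.trans (Nat.sub_le n k))
    refine not_posSemidef_one_add_mul_rpow (z := x ∘ e) h₁ h₂
      (hx.comp (Fin.castLE_injective _)) (fun i => (hxpos _).le) ?_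
    convert hPSD.submatrix e using 1
    ext i j
    have : ¬ n - k ≤ (e i : ℕ) := by simp only [e, Fin.val_castLE]; omega
    simp only [hadamardPower, submatrix_apply, of_apply, Function.comp_apply, this, and_false,
      if_false, mul_zero, add_zero]
  · rintro ⟨m, rfl⟩
    have hA := posSemidef_vecMulVec_add_vecMulVec_add_diagonal x
      (fun i => ε * if n - k ≤ (i : ℕ) then 1 else 0) fun i => by positivity
    convert hA.map_pow m using 2
    ext i j
    simp [hadamardPower, vecMulVec, Matrix.diagonal_apply, ite_and]

/-- For `A_{n,k,ε} = [1 + x_i x_j] + ε R_{n,k}` with `ε > 0` and `α ∈ [0, n-k-2]`,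
the `α`th Hadamard power of `A_{n,k,ε}` is positive semi-definite iff `α` is an
integer. -/
theorem hadamard_power_psd_iff_integer_on_initial_segment (n k : ℕ) (hn : 4 ≤ n)
    (hk : 2 ≤ k) (hkn : k + 2 ≤ n) (x : Fin n → ℝ) (hx : Function.Injective x)
    (hxpos : ∀ i, 0 < x i) (ε : ℝ) (hε : 0 < ε) :
    ∀ α : ℝ, 0 ≤ α → α ≤ (n : ℝ) - (k : ℝ) - 2 →
      ((hadamardPower
          (Matrix.of fun i j : Fin n =>
            (1 + x i * x j) + ε * (if i = j ∧ n - k ≤ (i : ℕ) then 1 else 0))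
          α).PosSemidef ↔ ∃ m : ℕ, α = (m : ℝ)) :=
  hadamard_power_psd_iff_integer_on_initial_segment_general n k x hx hxpos ε hε
end

section
/- Fix an integer n ≥ 4. Let x_1, …, x_n be distinct positive real numbers, let A_n := [1 + x_i x_j]_{1≤i,j≤n}, and set A_{n,ε} := A_n + ε I_n where I_n is the n×n identity matrix. Then there exists ε_0 > 0 such that for every 0 < ε < ε_0 there exists δ > 0 with the property: for every integer ℓ with 1 ≤ ℓ ≤ n−2 and every real α ∈ [ℓ−δ, ℓ+δ], the entrywise power matrix A_{n,ε}^{∘α} is positive semi-definite. -/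
open Finset Matrix


lemma aux_pow_add (a e : ℝ) (ha : 1 ≤ a) (he : 0 ≤ e) (ℓ : ℕ) :
    a ^ ℓ + ℓ * e ≤ (a + e) ^ ℓ := by
  induction ℓ with
  | zero => simp
  | succ m ih =>
    have h1 : (1:ℝ) ≤ a ^ m := one_le_pow₀ ha
    have h2 : (0:ℝ) ≤ (m:ℝ) * e := by positivity
    calc a ^ (m+1) + ((m:ℕ)+1 : ℕ) * e ≤ (a ^ m + m * e) * (a + e) := by
          push_cast
          nlinarith [pow_succ a m, mul_le_mul_of_nonneg_right h1 he,
            mul_le_mul_of_nonneg_left ha h2, mul_nonneg h2 he]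
      _ ≤ (a+e)^m * (a+e) := mul_le_mul_of_nonneg_right ih (by linarith)
      _ = (a+e)^(m+1) := (pow_succ _ _).symm

lemma aux_quad_nonneg {n : ℕ} (v y : Fin n → ℝ) (ℓ : ℕ) :
    0 ≤ ∑ i, ∑ j, y i * (1 + v i * v j) ^ ℓ * y j := by
  have key : ∀ i j : Fin n, y i * (1 + v i * v j) ^ ℓ * y j
      = ∑ k ∈ Finset.range (ℓ+1),
          (ℓ.choose k : ℝ) * ((y i * v i ^ k) * (y j * v j ^ k)) := by
    intro i j
    rw [add_comm (1:ℝ), add_pow, Finset.mul_sum, Finset.sum_mul]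
    exact Finset.sum_congr rfl fun k _ => by ring
  calc ∑ i, ∑ j, y i * (1 + v i * v j) ^ ℓ * y j
      = ∑ i, ∑ j, ∑ k ∈ Finset.range (ℓ+1),
          (ℓ.choose k : ℝ) * ((y i * v i ^ k) * (y j * v j ^ k)) :=
        Finset.sum_congr rfl fun i _ => Finset.sum_congr rfl fun j _ => key i j
    _ = ∑ i, ∑ k ∈ Finset.range (ℓ+1), ∑ j,
          (ℓ.choose k : ℝ) * ((y i * v i ^ k) * (y j * v j ^ k)) :=
        Finset.sum_congr rfl fun i _ => Finset.sum_comm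
    _ = ∑ k ∈ Finset.range (ℓ+1), ∑ i, ∑ j,
          (ℓ.choose k : ℝ) * ((y i * v i ^ k) * (y j * v j ^ k)) := Finset.sum_comm
    _ = ∑ k ∈ Finset.range (ℓ+1), (ℓ.choose k : ℝ) * (∑ i, y i * v i ^ k)^2 := by
        refine Finset.sum_congr rfl fun k _ => ?_
        rw [sq, Finset.sum_mul_sum]
        simp [Finset.mul_sum]
    _ ≥ 0 := Finset.sum_nonneg fun k _ => by positivity

lemma aux_key {n : ℕ} (x : Fin n → ℝ) (hxpos : ∀ i, 0 < x i) (ε : ℝ) (hε : 0 < ε)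
    (ℓ : ℕ) :
    ∃ δ > (0:ℝ), 1 ≤ ℓ → ∀ α : ℝ, |α - (ℓ:ℝ)| ≤ δ →
      (hadamardPower
        (Matrix.of fun i j : Fin n => (1 + x i * x j) + (if i = j then ε else 0))
        α).PosSemidef := by
  set A : Matrix (Fin n) (Fin n) ℝ :=
    Matrix.of fun i j : Fin n => (1 + x i * x j) + (if i = j then ε else 0) with hAdef
  have hA1 : ∀ i j, (1:ℝ) ≤ A i j := by
    intro i j
    simp only [hAdef, Matrix.of_apply]
    have := mul_pos (hxpos i) (hxpos j)
    split_ifs <;> nlinarith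
  have hApos : ∀ i j, (0:ℝ) < A i j := fun i j => lt_of_lt_of_le one_pos (hA1 i j)
  have hAsym : ∀ i j, A i j = A j i := by
    intro i j
    by_cases h : i = j
    · subst h; rfl
    · simp only [hAdef, Matrix.of_apply, if_neg h, if_neg (fun h' : j = i => h h'.symm)]
      ring
  set F : ℝ → ℝ := fun α => ∑ i, ∑ j, |A i j ^ α - A i j ^ (ℓ:ℝ)| with hFdef
  have hFc : Continuous F := by
    apply continuous_finset_sum
    intro i _
    apply continuous_finset_sum
    intro j _
    have : (fun α : ℝ => |A i j ^ α - A i j ^ (ℓ:ℝ)|)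
        = fun α => |Real.exp (Real.log (A i j) * α) - A i j ^ (ℓ:ℝ)| :=
      funext fun α => by rw [Real.rpow_def_of_pos (hApos i j)]
    rw [this]
    exact ((Real.continuous_exp.comp (continuous_const.mul continuous_id)).sub
      continuous_const).abs
  have hF0 : F (ℓ:ℝ) = 0 := by simp [hFdef]
  obtain ⟨δ, hδ, hδ2⟩ := Metric.continuous_iff.mp hFc (ℓ:ℝ) ε hε
  refine ⟨δ/2, by linarith, fun hℓ α hα => ?_⟩
  have hFα : F α < ε := by
    have h := hδ2 α (by rw [Real.dist_eq]; linarith [abs_nonneg (α - (ℓ:ℝ))])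
    rw [Real.dist_eq, hF0, sub_zero] at h
    exact lt_of_le_of_lt (le_abs_self _) h
  refine Matrix.posSemidef_iff_dotProduct_mulVec.mpr ⟨?_, ?_⟩
  · show (hadamardPower A α)ᴴ = hadamardPower A α
    ext i j
    simp only [Matrix.conjTranspose_apply, hadamardPower, Matrix.of_apply, star_trivial]
    rw [hAsym j i]
  · intro y
    have expand : star y ⬝ᵥ (hadamardPower A α) *ᵥ y = ∑ i, ∑ j, y i * (A i j ^ α * y j) := by
      simp [dotProduct, Matrix.mulVec, hadamardPower, Finset.mul_sum]
    rw [expand]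
    set S : ℝ := ∑ i, y i ^ 2 with hSdef
    have hS0 : 0 ≤ S := Finset.sum_nonneg fun i _ => sq_nonneg _
    have hsplit : ∀ i j : Fin n, y i * (A i j ^ α * y j)
        = y i * (A i j) ^ ℓ * y j + y i * (A i j ^ α - A i j ^ (ℓ:ℝ)) * y j := by
      intro i j
      rw [← Real.rpow_natCast (A i j) ℓ]
      ring
    have hq : ∑ i, ∑ j, y i * (A i j ^ α * y j)
        = (∑ i, ∑ j, y i * (A i j) ^ ℓ * y j)
          + ∑ i, ∑ j, y i * (A i j ^ α - A i j ^ (ℓ:ℝ)) * y j := by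
      rw [← Finset.sum_add_distrib]
      refine Finset.sum_congr rfl fun i _ => ?_
      rw [← Finset.sum_add_distrib]
      exact Finset.sum_congr rfl fun j _ => hsplit i j
    rw [hq]
    -- split integer-power part into base + diagonal
    have hdiag : ∀ i j : Fin n, y i * (A i j) ^ ℓ * y j
        = y i * (1 + x i * x j) ^ ℓ * y j
          + (if i = j then y i ^ 2 * ((1 + x i * x i + ε) ^ ℓ - (1 + x i * x i) ^ ℓ) else 0) := by
      intro i j
      by_cases h : i = j
      · subst h
        simp only [hAdef, Matrix.of_apply, if_pos rfl]
        simp only [if_pos trivial]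
        ring
      · simp only [hAdef, Matrix.of_apply, if_neg h, add_zero]
    have hT1 : (∑ i, ∑ j, y i * (A i j) ^ ℓ * y j)
        = (∑ i, ∑ j, y i * (1 + x i * x j) ^ ℓ * y j)
          + ∑ i, y i ^ 2 * ((1 + x i * x i + ε) ^ ℓ - (1 + x i * x i) ^ ℓ) := by
      rw [← Finset.sum_add_distrib]
      refine Finset.sum_congr rfl fun i _ => ?_
      calc ∑ j, y i * (A i j) ^ ℓ * y j
          = ∑ j, (y i * (1 + x i * x j) ^ ℓ * y j
              + (if i = j then y i ^ 2 * ((1 + x i * x i + ε) ^ ℓ - (1 + x i * x i) ^ ℓ) else 0)) :=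
            Finset.sum_congr rfl fun j _ => hdiag i j
        _ = (∑ j, y i * (1 + x i * x j) ^ ℓ * y j)
              + ∑ j, (if i = j then y i ^ 2 * ((1 + x i * x i + ε) ^ ℓ - (1 + x i * x i) ^ ℓ) else 0) :=
            Finset.sum_add_distrib
        _ = _ := by rw [Finset.sum_ite_eq]; simp
    have hT1a : 0 ≤ ∑ i, ∑ j, y i * (1 + x i * x j) ^ ℓ * y j := aux_quad_nonneg x y ℓ
    have hT1b : ε * S ≤ ∑ i, y i ^ 2 * ((1 + x i * x i + ε) ^ ℓ - (1 + x i * x i) ^ ℓ) := by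
      rw [hSdef, Finset.mul_sum]
      refine Finset.sum_le_sum fun i _ => ?_
      have ha : (1:ℝ) ≤ 1 + x i * x i := by nlinarith [mul_pos (hxpos i) (hxpos i)]
      have hb := aux_pow_add (1 + x i * x i) ε ha hε.le ℓ
      have hc : (1:ℝ) ≤ (ℓ:ℝ) := by exact_mod_cast hℓ
      have : ε ≤ (1 + x i * x i + ε) ^ ℓ - (1 + x i * x i) ^ ℓ := by nlinarith
      calc ε * y i ^ 2 = y i ^ 2 * ε := by ring
        _ ≤ y i ^ 2 * ((1 + x i * x i + ε) ^ ℓ - (1 + x i * x i) ^ ℓ) :=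
            mul_le_mul_of_nonneg_left this (sq_nonneg _)
    have hT2 : |∑ i, ∑ j, y i * (A i j ^ α - A i j ^ (ℓ:ℝ)) * y j| ≤ S * F α := by
      calc |∑ i, ∑ j, y i * (A i j ^ α - A i j ^ (ℓ:ℝ)) * y j|
          ≤ ∑ i, |∑ j, y i * (A i j ^ α - A i j ^ (ℓ:ℝ)) * y j| :=
            Finset.abs_sum_le_sum_abs _ _
        _ ≤ ∑ i, ∑ j, |y i * (A i j ^ α - A i j ^ (ℓ:ℝ)) * y j| :=
            Finset.sum_le_sum fun i _ => Finset.abs_sum_le_sum_abs _ _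
        _ ≤ ∑ i, ∑ j, S * |A i j ^ α - A i j ^ (ℓ:ℝ)| := by
            refine Finset.sum_le_sum fun i _ => Finset.sum_le_sum fun j _ => ?_
            have hyi : y i ^ 2 ≤ S := Finset.single_le_sum
              (fun k (_ : k ∈ Finset.univ) => sq_nonneg (y k)) (Finset.mem_univ i)
            have hyj : y j ^ 2 ≤ S := Finset.single_le_sum
              (fun k (_ : k ∈ Finset.univ) => sq_nonneg (y k)) (Finset.mem_univ j)
            have h3 : |y i| * |y j| ≤ S := by
              nlinarith [sq_nonneg (|y i| - |y j|), sq_abs (y i), sq_abs (y j)]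
            calc |y i * (A i j ^ α - A i j ^ (ℓ:ℝ)) * y j|
                = (|y i| * |y j|) * |A i j ^ α - A i j ^ (ℓ:ℝ)| := by
                  rw [abs_mul, abs_mul]; ring
              _ ≤ S * |A i j ^ α - A i j ^ (ℓ:ℝ)| :=
                  mul_le_mul_of_nonneg_right h3 (abs_nonneg _)
        _ = S * F α := by
            rw [hFdef]
            simp [Finset.mul_sum]
    have hSF : S * F α ≤ S * ε := mul_le_mul_of_nonneg_left hFα.le hS0
    have hT2' : -(S * ε) ≤ ∑ i, ∑ j, y i * (A i j ^ α - A i j ^ (ℓ:ℝ)) * y j := by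
      have := neg_abs_le (∑ i, ∑ j, y i * (A i j ^ α - A i j ^ (ℓ:ℝ)) * y j)
      linarith
    rw [hT1]
    nlinarith

/-- For `A_{n,ε} = [1 + x_i x_j] + ε I_n` with `ε > 0` small enough, there is `δ > 0`
such that for every integer `ℓ` with `1 ≤ ℓ ≤ n-2` and every `α ∈ [ℓ-δ, ℓ+δ]`, the
`α`th Hadamard power of `A_{n,ε}` is positive semi-definite. -/
theorem hadamard_power_psd_near_integers_identity_perturbation (n : ℕ) (hn : 4 ≤ n)
    (x : Fin n → ℝ) (hx : Function.Injective x) (hxpos : ∀ i, 0 < x i) :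
    ∃ ε₀ > (0 : ℝ), ∀ ε : ℝ, 0 < ε → ε < ε₀ →
      ∃ δ > (0 : ℝ), ∀ ℓ : ℕ, 1 ≤ ℓ → ℓ + 2 ≤ n →
        ∀ α : ℝ, (ℓ : ℝ) - δ ≤ α → α ≤ (ℓ : ℝ) + δ →
          (hadamardPower
            (Matrix.of fun i j : Fin n =>
              (1 + x i * x j) + (if i = j then ε else 0))
            α).PosSemidef := by
  refine ⟨1, one_pos, fun ε hε _ => ?_⟩
  choose f hf hpsd using aux_key x hxpos ε hε
  have hne : (Finset.Icc 1 (n-2)).Nonempty := ⟨1, by simp; omega⟩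
  refine ⟨(Finset.Icc 1 (n-2)).inf' hne f, ?_, ?_⟩
  · exact (Finset.lt_inf'_iff hne).mpr fun b _ => hf b
  · intro ℓ h1 h2 α hα1 hα2
    have hmem : ℓ ∈ Finset.Icc 1 (n-2) := Finset.mem_Icc.mpr ⟨h1, by omega⟩
    have hle : (Finset.Icc 1 (n-2)).inf' hne f ≤ f ℓ := Finset.inf'_le f hmem
    exact hpsd ℓ h1 α (abs_le.mpr ⟨by linarith, by linarith⟩)
end

section
/- Fix an even integer n ≥ 4. Let C_n := [cos((i−j)π/n)]_{0≤i,j≤n−1} and C_{n,ε} := C_n + ε I_n. Then there exists ε_0 > 0 such that for every 0 < ε < ε_0 there exists δ > 0 with the property: for every even integer k with 2 ≤ k ≤ n−2 and every real α ∈ [k−δ, k+δ], the matrix |C_{n,ε}|_∘^{∘α} := [|(C_{n,ε})_{ij}|^α] is positive semi-definite. -/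
/-!
At an even integer `k` the entrywise power of `C + ε I`, where `C = [cos (θᵢ - θⱼ)]`, is
`C^{∘k} + ((1 + ε)^k - 1) I`. As `C` is the Gram matrix of the vectors `(cos θᵢ, sin θᵢ)`, the
Schur product theorem makes `C^{∘k}` positive semidefinite, so the power sits a positive multiple
of the identity above a positive semidefinite matrix. That margin absorbs every symmetric
perturbation whose entries are small enough, and for `k ≠ 0` the entries `|aᵢⱼ|^α` depend
continuously on `α` near `k`; finitely many `k` then share one `δ`.
-/

/-- The `α`th entrywise absolute power `[|a_ij|^α]` of a real matrix, using the real
power function `Real.rpow` (so that `0 ^ 0 = 1`). -/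
noncomputable def absHadamardPower {n : ℕ} (A : Matrix (Fin n) (Fin n) ℝ) (α : ℝ) :
    Matrix (Fin n) (Fin n) ℝ :=
  Matrix.of fun i j => |A i j| ^ α

open Filter Topology Matrix Real
open scoped ComplexOrder

namespace Matrix

variable {ι : Type*} [Fintype ι]

theorem abs_dotProduct_mulVec_le (E : Matrix ι ι ℝ) (x : ι → ℝ) :
    |x ⬝ᵥ E *ᵥ x| ≤ (∑ i, ∑ j, |E i j|) * (x ⬝ᵥ x) := by
  have hx : ∀ i j, |x i * x j| ≤ x ⬝ᵥ x := fun i j => by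
    change _ ≤ ∑ l, x l * x l
    have hi := Finset.single_le_sum (fun l _ => mul_self_nonneg (x l)) (Finset.mem_univ i)
    have hj := Finset.single_le_sum (fun l _ => mul_self_nonneg (x l)) (Finset.mem_univ j)
    rw [abs_mul]
    nlinarith [sq_nonneg (|x i| - |x j|), abs_mul_abs_self (x i), abs_mul_abs_self (x j)]
  calc |x ⬝ᵥ E *ᵥ x| = |∑ i, ∑ j, E i j * (x i * x j)| := by
        simp only [dotProduct, mulVec, Finset.mul_sum]
        congr 1
        refine Finset.sum_congr rfl fun i _ => Finset.sum_congr rfl fun j _ => by ring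
    _ ≤ ∑ i, ∑ j, |E i j| * (x ⬝ᵥ x) := by
        refine (Finset.abs_sum_le_sum_abs _ _).trans (Finset.sum_le_sum fun i _ => ?_)
        refine (Finset.abs_sum_le_sum_abs _ _).trans (Finset.sum_le_sum fun j _ => ?_)
        rw [abs_mul]
        exact mul_le_mul_of_nonneg_left (hx i j) (abs_nonneg _)
    _ = (∑ i, ∑ j, |E i j|) * (x ⬝ᵥ x) := by simp only [Finset.sum_mul]

theorem posSemidef_smul_one_add_of_sum_abs_le [DecidableEq ι] {E : Matrix ι ι ℝ} {c : ℝ}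
    (hE : E.IsHermitian) (hc : ∑ i, ∑ j, |E i j| ≤ c) : (c • 1 + E).PosSemidef := by
  refine .of_dotProduct_mulVec_nonneg ((isHermitian_one.smul (.all c)).add hE) fun x => ?_
  have hxx : 0 ≤ x ⬝ᵥ x := Finset.sum_nonneg fun i _ => mul_self_nonneg (x i)
  have hquad := (abs_le.mp (abs_dotProduct_mulVec_le E x)).1
  simp only [star_trivial, add_mulVec, smul_mulVec, one_mulVec, dotProduct_add,
    dotProduct_smul, smul_eq_mul]
  nlinarith

theorem PosSemidef.eventually_posSemidef_of_tendsto [DecidableEq ι] {α : Type*} {l : Filter α}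
    {N : α → Matrix ι ι ℝ} {P : Matrix ι ι ℝ} {c : ℝ} (hP : P.PosSemidef) (hc : 0 < c)
    (hN : Tendsto N l (𝓝 (P + c • 1))) (hsymm : ∀ᶠ a in l, (N a).IsHermitian) :
    ∀ᶠ a in l, (N a).PosSemidef := by
  set M := P + c • 1
  have hsmall : ∀ᶠ a in l, ∑ i, ∑ j, |(N a - M) i j| < c := by
    have hcont : Continuous fun B : Matrix ι ι ℝ => ∑ i, ∑ j, |(B - M) i j| := by fun_prop
    refine (hcont.tendsto M).comp hN |>.eventually (gt_mem_nhds ?_)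
    simpa using hc
  filter_upwards [hsmall, hsymm] with a ha haHerm
  have hsplit : N a = P + (c • 1 + (N a - M)) := by simp only [M]; abel
  rw [hsplit]
  exact hP.add <| posSemidef_smul_one_add_of_sum_abs_le (haHerm.sub (hP.1.add
    (isHermitian_one.smul (.all c)))) ha.le

variable {𝕜 : Type*} [RCLike 𝕜]

theorem PosSemidef.map_pow_s4 {A : Matrix ι ι 𝕜} (hA : A.PosSemidef) :
    ∀ k : ℕ, (A.map (· ^ k)).PosSemidef
  | 0 => by
    have hone : A.map (· ^ 0) = vecMulVec 1 (star 1) := by ext; simp [vecMulVec]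
    exact hone ▸ posSemidef_vecMulVec_self_star 1
  | k + 1 => by
    have hsucc : A.map (· ^ (k + 1)) = A.map (· ^ k) ⊙ A := by ext; simp [pow_succ]
    exact hsucc ▸ (hA.map_pow_s4 k).hadamard hA

end Matrix

theorem posSemidef_cos_sub {ι : Type*} [Fintype ι] (θ : ι → ℝ) :
    (Matrix.of fun i j => cos (θ i - θ j)).PosSemidef := by
  have hsum : (Matrix.of fun i j => cos (θ i - θ j))
      = vecMulVec (cos ∘ θ) (star (cos ∘ θ))
        + vecMulVec (sin ∘ θ) (star (sin ∘ θ)) := by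
    ext i j; simp [vecMulVec_apply, cos_sub]
  rw [hsum]
  exact (posSemidef_vecMulVec_self_star _).add (posSemidef_vecMulVec_self_star _)

section absHadamardPower

variable {n : ℕ} {A : Matrix (Fin n) (Fin n) ℝ}

theorem Matrix.IsHermitian.absHadamardPower (hA : A.IsHermitian) (α : ℝ) :
    (absHadamardPower A α).IsHermitian := by
  ext i j
  simp [_root_.absHadamardPower, ← hA.apply i j]

theorem continuousAt_absHadamardPower (A : Matrix (Fin n) (Fin n) ℝ) {α : ℝ} (hα : α ≠ 0) :
    ContinuousAt (absHadamardPower A) α :=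
  continuousAt_pi.2 fun _ => continuousAt_pi.2 fun _ => Real.continuousAt_const_rpow' hα

theorem absHadamardPower_add_smul_one_of_even (hdiag : ∀ i, A i i = 1) (ε : ℝ) {k : ℕ}
    (hk : Even k) :
    absHadamardPower (A + ε • 1) k = A.map (· ^ k) + ((1 + ε) ^ k - 1) • 1 := by
  ext i j
  rcases eq_or_ne i j with rfl | hij
  · simp [absHadamardPower, hdiag, hk.pow_abs, add_comm]
  · simp [absHadamardPower, hij, hk.pow_abs]

theorem eventually_posSemidef_absHadamardPower_add_smul_one (hA : A.PosSemidef)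
    (hdiag : ∀ i, A i i = 1) {ε : ℝ} (hε : 0 < ε) {k : ℕ} (hk : Even k) (hk₀ : k ≠ 0) :
    ∀ᶠ α in 𝓝 (k : ℝ), (absHadamardPower (A + ε • 1) α).PosSemidef := by
  have hgap : 0 < (1 + ε) ^ k - 1 := sub_pos.2 (one_lt_pow₀ (by linarith) hk₀)
  have hlim := (continuousAt_absHadamardPower (A + ε • 1) (Nat.cast_ne_zero.2 hk₀)).tendsto
  rw [absHadamardPower_add_smul_one_of_even hdiag ε hk] at hlim
  exact (hA.map_pow_s4 k).eventually_posSemidef_of_tendsto hgap hlim <| .of_forall fun α =>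
    (hA.1.add (isHermitian_one.smul (.all ε))).absHadamardPower α

end absHadamardPower

theorem exists_pos_forall_abs_sub_le_of_eventually {ι : Type*} (s : Finset ι) (x : ι → ℝ)
    {p : ι → ℝ → Prop} (h : ∀ i ∈ s, ∀ᶠ y in 𝓝 (x i), p i y) :
    ∃ δ > 0, ∀ i ∈ s, ∀ y, |y - x i| ≤ δ → p i y := by
  have hshift : ∀ᶠ t in 𝓝 (0 : ℝ), ∀ i ∈ s, p i (x i + t) :=
    (eventually_all_finset s).2 fun i hi =>
      (continuous_const_add (x i)).continuousAt.tendsto.eventually (by simpa using h i hi)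
  obtain ⟨δ, hδ, hball⟩ := Metric.eventually_nhds_iff.1 hshift
  refine ⟨δ / 2, half_pos hδ, fun i hi y hy => ?_⟩
  have hyt : dist (y - x i) 0 < δ := by rw [dist_zero_right, Real.norm_eq_abs]; linarith
  simpa using hball hyt i hi

theorem abs_hadamard_power_cos_psd_near_even_integers_general (n : ℕ) :
    ∃ ε₀ > (0 : ℝ), ∀ ε : ℝ, 0 < ε → ε < ε₀ →
      ∃ δ > (0 : ℝ), ∀ k : ℕ, Even k → 2 ≤ k → k + 2 ≤ n →
        ∀ α : ℝ, (k : ℝ) - δ ≤ α → α ≤ (k : ℝ) + δ →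
          (absHadamardPower
            (Matrix.of fun i j : Fin n =>
              Real.cos (((i : ℝ) - (j : ℝ)) * Real.pi / (n : ℝ)) +
                (if i = j then ε else 0))
            α).PosSemidef := by
  refine ⟨1, one_pos, fun ε hε _ => ?_⟩
  set C : Matrix (Fin n) (Fin n) ℝ := Matrix.of fun i j => cos ((i : ℝ) * π / n - j * π / n)
  have hC : C.PosSemidef := posSemidef_cos_sub _
  have hCdiag : ∀ i, C i i = 1 := by simp [C]
  have hA : (Matrix.of fun i j : Fin n => cos (((i : ℝ) - (j : ℝ)) * π / n) +
      (if i = j then ε else 0)) = C + ε • 1 := by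
    ext i j; simp [C, Matrix.one_apply, sub_mul, sub_div]
  let K := (Finset.range n).filter fun k => Even k ∧ 2 ≤ k
  obtain ⟨δ, hδ, hK⟩ := exists_pos_forall_abs_sub_le_of_eventually K (fun k : ℕ => (k : ℝ))
    fun k hk => by
      obtain ⟨-, hk, hk2⟩ := Finset.mem_filter.1 hk
      exact eventually_posSemidef_absHadamardPower_add_smul_one hC hCdiag hε hk (by omega)
  refine ⟨δ, hδ, fun k hk hk2 hkn α hα₁ hα₂ => ?_⟩
  rw [hA]
  exact hK k (by simp [K, hk, hk2]; omega) α (abs_le.2 ⟨by linarith, by linarith⟩)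

/-- For even `n ≥ 4` and `C_{n,ε} = [cos((i-j)π/n)] + ε I_n` with `ε > 0` small
enough, there is `δ > 0` such that for every even integer `k` with `2 ≤ k ≤ n-2` and
every `α ∈ [k-δ, k+δ]`, the matrix `[|(C_{n,ε})_{ij}|^α]` is positive semi-definite. -/
theorem abs_hadamard_power_cos_psd_near_even_integers (n : ℕ) (hn : 4 ≤ n)
    (hne : Even n) :
    ∃ ε₀ > (0 : ℝ), ∀ ε : ℝ, 0 < ε → ε < ε₀ →
      ∃ δ > (0 : ℝ), ∀ k : ℕ, Even k → 2 ≤ k → k + 2 ≤ n →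
        ∀ α : ℝ, (k : ℝ) - δ ≤ α → α ≤ (k : ℝ) + δ →
          (absHadamardPower
            (Matrix.of fun i j : Fin n =>
              Real.cos (((i : ℝ) - (j : ℝ)) * Real.pi / (n : ℝ)) +
                (if i = j then ε else 0))
            α).PosSemidef :=
  abs_hadamard_power_cos_psd_near_even_integers_general n
end

section
/- Fix an odd integer n ≥ 5. Let C_n := [cos((i−j)π/n)]_{0≤i,j≤n−1} and C_{n,ε} := C_n + ε I_n. Then there exists ε_0 > 0 such that for every 0 < ε < ε_0 and every even integer k with 2 ≤ k ≤ n−3, the matrix |C_{n,ε}|_∘^{∘(k−1)} := [|(C_{n,ε})_{ij}|^{k−1}] is not positive semi-definite. -/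
open Real Finset Matrix intervalIntegral MeasureTheory

section Aux

lemma beta_csc {a : ℝ} (h0 : 0 < a) (h1 : a < 1) :
    ∫ x in (0:ℝ)..1, x ^ (a - 1) * (1 - x) ^ (-a) = π / Real.sin (π * a) := by
  have key : Complex.Gamma a * Complex.Gamma (1 - a) =
      Complex.Gamma ((a : ℂ) + (1 - a)) * Complex.betaIntegral a (1 - a) :=
    Complex.Gamma_mul_Gamma_eq_betaIntegral (by simpa using h0) (by simp [Complex.sub_re]; simpa using h1)
  rw [show ((a:ℂ) + (1 - a)) = 1 by ring, Complex.Gamma_one, one_mul,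
    Complex.Gamma_mul_Gamma_one_sub] at key
  have hbeta : Complex.betaIntegral a (1 - a) =
      ((∫ x in (0:ℝ)..1, x ^ (a - 1) * (1 - x) ^ (-a) : ℝ) : ℂ) := by
    rw [Complex.betaIntegral, ← intervalIntegral.integral_ofReal]
    refine intervalIntegral.integral_congr fun x hx => ?_
    rw [Set.uIcc_of_le (by norm_num : (0:ℝ) ≤ 1)] at hx
    push_cast
    rw [Complex.ofReal_cpow hx.1, Complex.ofReal_cpow (by linarith [hx.2] : (0:ℝ) ≤ 1 - x)]
    push_cast
    ring_nf
  rw [hbeta] at key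
  have : ((π / Real.sin (π * a) : ℝ) : ℂ) = (π : ℂ) / Complex.sin (π * a) := by
    push_cast [Complex.ofReal_sin]
    norm_num
  rw [← this] at key
  exact_mod_cast key.symm

lemma pascal_sum (α : ℕ) (c : ℕ → ℝ) :
    ∑ j ∈ Finset.range (α+2), ((α+1).choose j : ℝ) * c j
      = ∑ j ∈ Finset.range (α+1), (α.choose j : ℝ) * c j
        + ∑ j ∈ Finset.range (α+1), (α.choose j : ℝ) * c (j+1) := by
  rw [Finset.sum_range_succ' _ (α+1)]
  simp only [Nat.choose_succ_succ, Nat.cast_add, add_mul, Finset.sum_add_distrib,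
    Nat.choose_zero_right, Nat.cast_one, one_mul]
  rw [Finset.sum_range_succ' (fun j => (α.choose j : ℝ) * c j) α]
  have h0 : ∑ j ∈ Finset.range (α+1), (α.choose (j+1) : ℝ) * c (j+1)
      = ∑ j ∈ Finset.range α, (α.choose (j+1) : ℝ) * c (j+1) := by
    rw [Finset.sum_range_succ, Nat.choose_succ_self]; simp
  rw [h0]; simp [Nat.choose_zero_right]; ring

lemma cos_pow_mul_cos (α : ℕ) : ∀ (s t : ℝ),
    Real.cos t ^ α * Real.cos ((α + s) * t) =
      (∑ j ∈ Finset.range (α + 1), (α.choose j : ℝ) * Real.cos ((2 * j + s) * t)) / 2 ^ α := by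
  induction α with
  | zero => intro s t; simp
  | succ α ih =>
    intro s t
    have key : Real.cos t ^ (α+1) * Real.cos ((↑(α+1) + s) * t)
        = Real.cos t * (Real.cos t ^ α * Real.cos ((↑α + (s+1)) * t)) := by
      push_cast; ring_nf
    rw [key, ih (s+1) t]
    have hT : (∑ j ∈ Finset.range (α + 1), (α.choose j : ℝ) *
          (Real.cos ((2 * j + s) * t) + Real.cos ((2 * (j+1) + s) * t)))
        = 2 * (Real.cos t * ∑ j ∈ Finset.range (α + 1),
            (α.choose j : ℝ) * Real.cos ((2 * j + (s+1)) * t)) := by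
      rw [Finset.mul_sum, Finset.mul_sum]
      refine Finset.sum_congr rfl fun j _ => ?_
      have e1 : (2 * (j:ℝ) + s) * t = (2 * j + (s+1)) * t - t := by ring
      have e2 : (2 * ((j:ℝ)+1) + s) * t = (2 * j + (s+1)) * t + t := by ring
      rw [e1, e2, Real.cos_add, Real.cos_sub]; ring
    have hP : ∑ j ∈ Finset.range (α+2), ((α+1).choose j : ℝ) * Real.cos ((2 * j + s) * t)
        = ∑ j ∈ Finset.range (α + 1), (α.choose j : ℝ) *
            (Real.cos ((2 * j + s) * t) + Real.cos ((2 * (j+1) + s) * t)) := by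
      rw [pascal_sum α (fun j => Real.cos ((2 * j + s) * t))]
      rw [← Finset.sum_add_distrib]
      refine Finset.sum_congr rfl fun j _ => ?_
      push_cast; ring
    rw [hP, hT]
    have h2 : (2:ℝ) ^ (α+1) = 2 ^ α * 2 := by ring
    rw [h2, mul_comm (2:ℝ) _, mul_div_mul_right _ _ two_ne_zero, mul_div_assoc]

lemma cos_nat_pi (m : ℕ) : Real.cos (m * π) = (-1) ^ m := by
  simpa using Real.cos_nat_mul_pi_sub 0 m

lemma sin_odd_half_pi (j : ℕ) : Real.sin ((2 * (j:ℝ) + 3) * π / 2) = (-1) ^ (j+1) := by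
  have : (2 * (j:ℝ) + 3) * π / 2 = ((j:ℝ)+1) * π + π / 2 := by ring
  rw [this, Real.sin_add_pi_div_two]
  have : ((j:ℝ)+1) * π = ((j+1 : ℕ) : ℝ) * π := by push_cast; ring
  rw [this, cos_nat_pi]

lemma dirichlet (n : ℕ) (hn : 0 < n) (q : ℝ) :
    (2 * Real.sin (q * π / (2*n))) *
      ∑ e ∈ Finset.range n, Real.cos (q * ((e:ℝ) - ((n:ℝ)-1)/2) * π / n)
      = 2 * Real.sin (q * π / 2) := by
  have hne : (n:ℝ) ≠ 0 := Nat.cast_ne_zero.mpr hn.ne'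
  have tel := Finset.sum_range_sub
    (fun e => Real.sin ((2*((e:ℝ) - ((n:ℝ)-1)/2) - 1) * (q * π / (2*n)))) n
  have step : ∀ e : ℕ,
      Real.sin ((2*(((e:ℝ)+1) - ((n:ℝ)-1)/2) - 1) * (q * π / (2*n)))
        - Real.sin ((2*((e:ℝ) - ((n:ℝ)-1)/2) - 1) * (q * π / (2*n)))
      = (2 * Real.sin (q * π / (2*n))) * Real.cos (q * ((e:ℝ) - ((n:ℝ)-1)/2) * π / n) := by
    intro e
    have e1 : (2*(((e:ℝ)+1) - ((n:ℝ)-1)/2) - 1) * (q * π / (2*n))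
        = q * ((e:ℝ) - ((n:ℝ)-1)/2) * π / n + q * π / (2*n) := by field_simp; ring
    have e2 : (2*((e:ℝ) - ((n:ℝ)-1)/2) - 1) * (q * π / (2*n))
        = q * ((e:ℝ) - ((n:ℝ)-1)/2) * π / n - q * π / (2*n) := by field_simp
    rw [e1, e2, Real.sin_add, Real.sin_sub]; ring
  calc (2 * Real.sin (q * π / (2*n))) *
      ∑ e ∈ Finset.range n, Real.cos (q * ((e:ℝ) - ((n:ℝ)-1)/2) * π / n)
      = ∑ e ∈ Finset.range n,
        (Real.sin ((2*(((e:ℝ)+1) - ((n:ℝ)-1)/2) - 1) * (q * π / (2*n)))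
          - Real.sin ((2*((e:ℝ) - ((n:ℝ)-1)/2) - 1) * (q * π / (2*n)))) := by
        rw [Finset.mul_sum]
        exact Finset.sum_congr rfl fun e _ => (step e).symm
    _ = Real.sin ((2*(((n:ℕ):ℝ) - ((n:ℝ)-1)/2) - 1) * (q * π / (2*n)))
          - Real.sin ((2*((0:ℝ) - ((n:ℝ)-1)/2) - 1) * (q * π / (2*n))) := by
        have := tel
        simp only [Nat.cast_zero] at this ⊢
        convert this using 3 <;> push_cast <;> ring
    _ = 2 * Real.sin (q * π / 2) := by
        have e1 : (2*(((n:ℕ):ℝ) - ((n:ℝ)-1)/2) - 1) * (q * π / (2*n)) = q * π / 2 := by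
          field_simp; ring
        have e2 : (2*((0:ℝ) - ((n:ℝ)-1)/2) - 1) * (q * π / (2*n)) = -(q * π / 2) := by
          field_simp; ring
        rw [e1, e2, Real.sin_neg]; ring

lemma shift_one (n : ℕ) (g : ℤ → ℝ) (hg : ∀ d : ℤ, g (d + n) = g d) (b : ℤ) :
    ∑ e ∈ Finset.range n, g (b + 1 + e) = ∑ e ∈ Finset.range n, g (b + e) := by
  have h1 : ∑ e ∈ Finset.range (n+1), g (b + e) =
      ∑ e ∈ Finset.range n, g (b + e) + g (b + n) := by
    rw [Finset.sum_range_succ]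
  have h2 : ∑ e ∈ Finset.range (n+1), g (b + e) =
      ∑ e ∈ Finset.range n, g (b + ↑(e+1)) + g (b + (0:ℕ)) := by
    rw [Finset.sum_range_succ' (fun e : ℕ => g (b + e)) n]
  have h3 : ∑ e ∈ Finset.range n, g (b + ↑(e+1)) = ∑ e ∈ Finset.range n, g (b + 1 + e) := by
    refine Finset.sum_congr rfl fun e _ => ?_
    congr 1; push_cast; ring
  have h4 : g (b + n) = g b := hg b
  have h5 : g (b + (0:ℕ)) = g b := by norm_num
  rw [h3, h5] at h2
  linarith [h1.symm.trans h2]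

lemma periodic_shift (n : ℕ) (g : ℤ → ℝ) (hg : ∀ d : ℤ, g (d + n) = g d) (a : ℤ) :
    ∑ e ∈ Finset.range n, g (a + e) = ∑ e ∈ Finset.range n, g e := by
  induction a using Int.induction_on with
  | zero => simp
  | succ a ih =>
    have := shift_one n g hg a
    rw [show ((a:ℤ) + 1) = (a:ℤ) + 1 from rfl]
    rw [this, ih]
  | pred a ih =>
    have := shift_one n g hg (-(a:ℤ) - 1)
    simp only [sub_add_cancel] at this
    rw [← this]
    exact ih

lemma qf_sum (n : ℕ) (g : ℤ → ℝ) (hg : ∀ d : ℤ, g (d + n) = g d) :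
    ∑ i : Fin n, ∑ j : Fin n, g ((i:ℤ) - (j:ℤ)) = n * ∑ v ∈ Finset.range n, g v := by
  have inner : ∀ i : Fin n, ∑ j : Fin n, g ((i:ℤ) - (j:ℤ)) = ∑ v ∈ Finset.range n, g v := by
    intro i
    have h1 : ∑ j : Fin n, g ((i:ℤ) - (j:ℤ)) = ∑ v ∈ Finset.range n, g ((i:ℤ) - v) := by
      rw [Finset.sum_range fun v => g ((i:ℤ) - v)]
    rw [h1, ← Finset.sum_range_reflect]
    have h2 : ∀ v ∈ Finset.range n, g ((i:ℤ) - (n - 1 - v : ℕ)) =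
        g (((i:ℤ) - n + 1) + v) := by
      intro v hv
      have hvlt := Finset.mem_range.mp hv
      have hn1 : 1 ≤ n := Nat.one_le_of_lt (Nat.lt_of_le_of_lt (Nat.zero_le _) hvlt)
      congr 1
      have : ((n - 1 - v : ℕ) : ℤ) = (n:ℤ) - 1 - v := by
        push_cast [Nat.cast_sub (Nat.le_sub_one_of_lt hvlt), Nat.cast_sub hn1]; ring
      rw [this]; ring
    rw [Finset.sum_congr rfl h2, periodic_shift n g hg ((i:ℤ) - n + 1)]
  rw [Finset.sum_congr rfl (fun i _ => inner i), Finset.sum_const]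
  simp [mul_comm]

-- integrability on [0, 1/2] of x^r * (1-x)^s for r > -1
lemma int_left {r s : ℝ} (hr : -1 < r) :
    IntervalIntegrable (fun x : ℝ => x ^ r * (1 - x) ^ s) volume 0 (1/2) := by
  apply (intervalIntegrable_rpow' hr (a := 0) (b := 1/2)).mul_continuousOn
  apply ContinuousOn.rpow_const (by fun_prop)
  intro x hx
  rw [Set.uIcc_of_le (by norm_num : (0:ℝ) ≤ 1/2)] at hx
  left
  have : x ≤ 1/2 := hx.2
  intro h; linarith [sub_eq_zero.mp h]

lemma int_right {r s : ℝ} (hs : -1 < s) :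
    IntervalIntegrable (fun x : ℝ => x ^ r * (1 - x) ^ s) volume (1/2) 1 := by
  have h := (int_left (r := s) (s := r) hs).comp_sub_left 1
  have heq : (fun x : ℝ => (1 - x) ^ s * (1 - (1 - x)) ^ r) =
      (fun x : ℝ => x ^ r * (1 - x) ^ s) := by
    funext x; rw [sub_sub_cancel]; ring
  rw [heq] at h
  rw [show (1:ℝ) - 1/2 = 1/2 by norm_num, show (1:ℝ) - 0 = 1 by norm_num] at h
  exact h.symm

set_option maxHeartbeats 1000000 in
lemma T_pos (n α : ℕ) (hα1 : 1 ≤ α) (hαn : α + 4 ≤ n) (hαo : Odd α) :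
    0 < ∑ j ∈ Finset.range (α+1),
      (-1:ℝ)^j * (α.choose j) / Real.sin ((2*j+3) * π / (2*n)) := by
  have hn5 : 5 ≤ n := by omega
  have hn0 : (0:ℝ) < n := by exact_mod_cast Nat.cast_pos.mpr (show 0 < n by omega)
  -- exponents
  set aj : ℕ → ℝ := fun j => (2*j+3)/(2*n) with haj
  have haj0 : ∀ j : ℕ, 0 < aj j := fun j => by positivity
  have haj1 : ∀ j ∈ Finset.range (α+1), aj j < 1 := by
    intro j hj
    have hj' : j ≤ α := Nat.lt_succ_iff.mp (Finset.mem_range.mp hj)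
    rw [haj, div_lt_one (by positivity)]
    push_cast
    have : (j:ℝ) ≤ α := by exact_mod_cast hj'
    have hcast : (α:ℝ) + 4 ≤ n := by exact_mod_cast hαn
    linarith
  have hsin : ∀ j ∈ Finset.range (α+1), (2*(j:ℝ)+3) * π / (2*n) = π * aj j := by
    intro j hj; rw [haj]; field_simp
  -- the two families of functions
  set h : ℕ → ℝ → ℝ := fun j x => x ^ (aj j - 1) * (1 - x) ^ (-aj j) with hh
  set φ : ℕ → ℝ → ℝ := fun j x => x ^ (-aj j) * (1 - x) ^ (aj j - 1) with hφ
  have intH : ∀ j : ℕ, IntervalIntegrable (h j) volume 0 (1/2) :=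
    fun j => int_left (by show (-1:ℝ) < aj j - 1; have := haj0 j; linarith)
  have intΦ : ∀ j : ℕ, j ∈ Finset.range (α+1) → IntervalIntegrable (φ j) volume 0 (1/2) :=
    fun j hj => int_left (by show (-1:ℝ) < -aj j; have := haj1 j hj; linarith)
  have intH2 : ∀ j ∈ Finset.range (α+1), IntervalIntegrable (h j) volume (1/2) 1 :=
    fun j hj => int_right (by show (-1:ℝ) < -aj j; have := haj1 j hj; linarith)
  -- ∫_0^1 h j = ∫_0^{1/2} h j + ∫_0^{1/2} φ j
  have split : ∀ j ∈ Finset.range (α+1),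
      ∫ x in (0:ℝ)..1, h j x
        = (∫ x in (0:ℝ)..(1/2), h j x) + ∫ x in (0:ℝ)..(1/2), φ j x := by
    intro j hj
    rw [← intervalIntegral.integral_add_adjacent_intervals (intH j) (intH2 j hj)]
    congr 1
    have hrefl : ∀ x : ℝ, φ j (1 - x) = h j x := by
      intro x; rw [hφ, hh]; simp only [sub_sub_cancel]; ring
    have := intervalIntegral.integral_comp_sub_left (a := 1/2) (b := 1) (φ j) 1
    simp only [hrefl] at this
    rw [this]
    norm_num
  -- value of full integral
  have value : ∀ j ∈ Finset.range (α+1),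
      ∫ x in (0:ℝ)..1, h j x = π / Real.sin ((2*j+3) * π / (2*n)) := by
    intro j hj
    rw [hsin j hj, hh]
    exact beta_csc (haj0 j) (haj1 j hj)
  -- main identity: π * T = ∫_0^{1/2} Ψ
  have key : π * (∑ j ∈ Finset.range (α+1),
        (-1:ℝ)^j * (α.choose j) / Real.sin ((2*j+3) * π / (2*n)))
      = ∫ x in (0:ℝ)..(1/2), ∑ j ∈ Finset.range (α+1),
          ((-1:ℝ)^j * (α.choose j)) * (h j x + φ j x) := by
    rw [Finset.mul_sum]
    rw [intervalIntegral.integral_finset_sum (fun j hj => by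
      exact (((intH j).add (intΦ j hj)).const_mul _))]
    refine Finset.sum_congr rfl fun j hj => ?_
    rw [intervalIntegral.integral_const_mul, intervalIntegral.integral_add (intH j) (intΦ j hj)]
    rw [← split j hj, value j hj]
    ring
  -- pointwise positivity of the integrand on (0, 1/2)
  have hpos : ∀ x ∈ Set.Ioo (0:ℝ) (1/2),
      0 < ∑ j ∈ Finset.range (α+1), ((-1:ℝ)^j * (α.choose j)) * (h j x + φ j x) := by
    intro x hx
    obtain ⟨hx0, hx2⟩ := hx
    have h1x : (0:ℝ) < 1 - x := by linarith
    have hxlt : x < 1 - x := by linarith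
    set u : ℝ := x ^ ((1:ℝ)/n) * (1-x) ^ (-(1:ℝ)/n) with hu
    have hu0 : 0 < u := by
      rw [hu]; positivity
    have hu1 : u < 1 := by
      rw [hu]
      have h1 : x ^ ((1:ℝ)/n) < (1-x) ^ ((1:ℝ)/n) :=
        Real.rpow_lt_rpow hx0.le hxlt (by positivity)
      have h2 : (1-x) ^ (-(1:ℝ)/n) = ((1-x) ^ ((1:ℝ)/n))⁻¹ := by
        rw [show (-(1:ℝ)/n) = -((1:ℝ)/n) by ring, Real.rpow_neg h1x.le]
      rw [h2, mul_inv_lt_iff₀ (by positivity), one_mul]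
      exact h1
    -- rewrite h j x
    have hAj : ∀ j : ℕ, h j x = (x ^ ((3:ℝ)/(2*n) - 1) * (1-x) ^ (-((3:ℝ)/(2*n)))) * u ^ j := by
      intro j
      simp only [hh, hu]
      have e1 : aj j - 1 = ((3:ℝ)/(2*n) - 1) + (j:ℝ) * ((1:ℝ)/n) := by
        rw [haj]; field_simp; ring
      have e2 : -aj j = (-((3:ℝ)/(2*n))) + (j:ℝ) * (-(1:ℝ)/n) := by
        rw [haj]; field_simp; ring
      rw [e1, e2, Real.rpow_add hx0, Real.rpow_add h1x]
      rw [mul_pow, ← Real.rpow_natCast (x ^ ((1:ℝ)/n)) j, ← Real.rpow_natCast ((1-x) ^ (-(1:ℝ)/n)) j]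
      rw [← Real.rpow_mul hx0.le, ← Real.rpow_mul h1x.le]
      rw [show (1:ℝ)/n * j = (j:ℝ) * ((1:ℝ)/n) by ring,
        show (-(1:ℝ)/n) * j = (j:ℝ) * (-(1:ℝ)/n) by ring]
      ring
    have hBj : ∀ j : ℕ, φ j x = (x ^ (-((3:ℝ)/(2*n))) * (1-x) ^ ((3:ℝ)/(2*n) - 1)) * (u⁻¹) ^ j := by
      intro j
      have huinv : u⁻¹ = x ^ (-(1:ℝ)/n) * (1-x) ^ ((1:ℝ)/n) := by
        rw [hu, mul_inv, ← Real.rpow_neg hx0.le, ← Real.rpow_neg h1x.le,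
          show (-(-(1:ℝ)/n)) = (1:ℝ)/n by ring, show (-((1:ℝ)/n)) = (-(1:ℝ)/n) by ring]
      simp only [hφ, huinv]
      have e1 : -aj j = (-((3:ℝ)/(2*n))) + (j:ℝ) * (-(1:ℝ)/n) := by
        rw [haj]; field_simp; ring
      have e2 : aj j - 1 = ((3:ℝ)/(2*n) - 1) + (j:ℝ) * ((1:ℝ)/n) := by
        rw [haj]; field_simp; ring
      rw [e1, e2, Real.rpow_add hx0, Real.rpow_add h1x]
      rw [mul_pow, ← Real.rpow_natCast (x ^ (-(1:ℝ)/n)) j,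
        ← Real.rpow_natCast ((1-x) ^ ((1:ℝ)/n)) j]
      rw [← Real.rpow_mul hx0.le, ← Real.rpow_mul h1x.le]
      rw [show (-(1:ℝ)/n) * j = (j:ℝ) * (-(1:ℝ)/n) by ring,
        show ((1:ℝ)/n) * j = (j:ℝ) * ((1:ℝ)/n) by ring]
      ring
    set A : ℝ := x ^ ((3:ℝ)/(2*n) - 1) * (1-x) ^ (-((3:ℝ)/(2*n))) with hA
    set B : ℝ := x ^ (-((3:ℝ)/(2*n))) * (1-x) ^ ((3:ℝ)/(2*n) - 1) with hB
    have hApos : 0 < A := by rw [hA]; positivity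
    have hBpos : 0 < B := by rw [hB]; positivity
    -- sum the binomials
    have sumEq : ∑ j ∈ Finset.range (α+1), ((-1:ℝ)^j * (α.choose j)) * (h j x + φ j x)
        = A * (1 - u) ^ α + B * (1 - u⁻¹) ^ α := by
      have binom : ∀ w : ℝ, (1 - w) ^ α
          = ∑ j ∈ Finset.range (α+1), ((-1:ℝ)^j * (α.choose j)) * w ^ j := by
        intro w
        rw [show (1:ℝ) - w = -w + 1 by ring, add_pow]
        refine Finset.sum_congr rfl fun j hj => ?_
        rw [neg_pow]; ring
      rw [binom u, binom u⁻¹, Finset.mul_sum, Finset.mul_sum, ← Finset.sum_add_distrib]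
      refine Finset.sum_congr rfl fun j hj => ?_
      rw [hAj j, hBj j]; ring
    rw [sumEq]
    -- (1 - u⁻¹)^α = -((1-u)^α / u^α)
    have hinv : (1 - u⁻¹) ^ α = -((1 - u) ^ α / u ^ α) := by
      have e : 1 - u⁻¹ = -((1 - u) / u) := by field_simp; ring
      rw [e, hαo.neg_pow, div_pow]
    rw [hinv]
    have h1u' : (0:ℝ) < 1 - u := by linarith
    have h1u : 0 < (1 - u) ^ α := pow_pos h1u' α
    have huα : 0 < u ^ α := by positivity
    -- need B < A * u^α
    have hkey : B < A * u ^ α := by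
      have huα' : u ^ α = x ^ ((α:ℝ)/n) * (1-x) ^ (-(α:ℝ)/n) := by
        rw [hu, mul_pow, ← Real.rpow_natCast (x ^ ((1:ℝ)/n)) α,
          ← Real.rpow_natCast ((1-x) ^ (-(1:ℝ)/n)) α,
          ← Real.rpow_mul hx0.le, ← Real.rpow_mul h1x.le]
        rw [show (1:ℝ)/n * α = (α:ℝ)/n by ring, show (-(1:ℝ)/n) * α = -(α:ℝ)/n by ring]
      set E : ℝ := ((α:ℝ)+3)/n - 1 with hE
      have hEneg : E < 0 := by
        rw [hE, sub_neg, div_lt_one hn0]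
        have : (α:ℝ) + 4 ≤ n := by exact_mod_cast hαn
        linarith
      have hw1 : x/(1-x) < 1 := by rw [div_lt_one h1x]; linarith
      have hw0 : 0 < x/(1-x) := by positivity
      have hwE : 1 < (x/(1-x)) ^ E :=
        Real.one_lt_rpow_iff_of_pos hw0 |>.mpr (Or.inr ⟨hw1, hEneg⟩)
      have hfact : A * u ^ α = (x/(1-x)) ^ E * B := by
        have exp1 : A * u ^ α
            = x ^ (((3:ℝ)/(2*n) - 1) + (α:ℝ)/n) * (1-x) ^ ((-((3:ℝ)/(2*n))) + (-(α:ℝ)/n)) := by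
          rw [hA, huα', Real.rpow_add hx0, Real.rpow_add h1x]; ring
        have exp2 : (x/(1-x)) ^ E * B
            = x ^ (E + (-((3:ℝ)/(2*n)))) * (1-x) ^ ((-E) + ((3:ℝ)/(2*n) - 1)) := by
          rw [Real.div_rpow hx0.le h1x.le, hB, Real.rpow_add hx0, Real.rpow_add h1x,
            Real.rpow_neg h1x.le E, div_eq_mul_inv]
          ring
        rw [exp1, exp2]
        have q1 : ((3:ℝ)/(2*n) - 1) + (α:ℝ)/n = E + (-((3:ℝ)/(2*n))) := by
          rw [hE]; field_simp; ring
        have q2 : (-((3:ℝ)/(2*n))) + (-(α:ℝ)/n) = (-E) + ((3:ℝ)/(2*n) - 1) := by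
          rw [hE]; field_simp; ring
        rw [q1, q2]
      rw [hfact]
      calc B = 1 * B := (one_mul B).symm
        _ < (x/(1-x)) ^ E * B := by exact mul_lt_mul_of_pos_right hwE hBpos
    have : 0 < A - B / u ^ α := by
      rw [sub_pos, div_lt_iff₀ huα]
      linarith [hkey]
    calc (0:ℝ) < (1-u)^α * (A - B / u ^ α) := mul_pos h1u this
      _ = A * (1-u)^α + B * -((1-u)^α / u^α) := by ring
  -- conclude
  have intΨ : IntervalIntegrable (fun x => ∑ j ∈ Finset.range (α+1),
      ((-1:ℝ)^j * (α.choose j)) * (h j x + φ j x)) volume 0 (1/2) := by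
    have h0 := IntervalIntegrable.sum (μ := MeasureTheory.volume) (a := (0:ℝ)) (b := 1/2)
      (Finset.range (α+1))
      (f := fun j => fun x => ((-1:ℝ)^j * (α.choose j)) * (h j x + φ j x))
      (fun j hj => ((intH j).add (intΦ j hj)).const_mul _)
    have heq : (∑ j ∈ Finset.range (α+1),
        fun x => ((-1:ℝ)^j * (α.choose j)) * (h j x + φ j x))
        = fun x => ∑ j ∈ Finset.range (α+1), ((-1:ℝ)^j * (α.choose j)) * (h j x + φ j x) := by
      funext x
      simp [Finset.sum_apply]
    rwa [heq] at h0
  have hI : 0 < ∫ x in (0:ℝ)..(1/2), ∑ j ∈ Finset.range (α+1),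
      ((-1:ℝ)^j * (α.choose j)) * (h j x + φ j x) :=
    intervalIntegral.intervalIntegral_pos_of_pos_on intΨ hpos (by norm_num)
  rw [← key] at hI
  by_contra hT
  push_neg at hT
  have h2 := mul_le_mul_of_nonneg_left hT Real.pi_pos.le
  simp only [mul_zero] at h2
  linarith

noncomputable def G (n α : ℕ) : ℤ → ℝ := fun d =>
  |Real.cos ((d:ℝ) * π / n)| ^ α * Real.cos (((α:ℝ)+3) * (d:ℝ) * π / n)

lemma G_periodic (n α : ℕ) (hn : 0 < n) (hαo : Odd α) :
    ∀ d : ℤ, G n α (d + n) = G n α d := by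
  intro d
  have hne : (n:ℝ) ≠ 0 := Nat.cast_ne_zero.mpr hn.ne'
  obtain ⟨m, hm⟩ := hαo
  unfold G
  have e1 : ((d + (n:ℤ) : ℤ) : ℝ) * π / n = (d:ℝ) * π / n + π := by
    push_cast; field_simp
  have e2 : ((α:ℝ)+3) * ((d + (n:ℤ) : ℤ) : ℝ) * π / n
      = ((α:ℝ)+3) * (d:ℝ) * π / n + (m + 2 : ℤ) * (2 * π) := by
    push_cast [hm]; field_simp; ring
  rw [e1, e2, Real.cos_add_int_mul_two_pi]
  congr 2
  rw [Real.cos_add_pi, abs_neg]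

lemma S_neg (n α : ℕ) (hn5 : 5 ≤ n) (hno : Odd n) (hα1 : 1 ≤ α) (hαo : Odd α)
    (hαn : α + 4 ≤ n) :
    ∑ v ∈ Finset.range n, G n α (v : ℤ) < 0 := by
  obtain ⟨M, hM⟩ := hno
  have hn0 : 0 < n := by omega
  have hne : (n:ℝ) ≠ 0 := Nat.cast_ne_zero.mpr hn0.ne'
  have hnR : (0:ℝ) < n := by exact_mod_cast hn0
  have hMreal : (M:ℝ) = ((n:ℝ)-1)/2 := by
    have : (n:ℝ) = 2*M+1 := by exact_mod_cast hM
    linarith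
  -- shift to symmetric window
  have step1 : ∑ v ∈ Finset.range n, G n α (v : ℤ)
      = ∑ e ∈ Finset.range n, G n α (-(M:ℤ) + e) :=
    (periodic_shift n (G n α) (G_periodic n α hn0 hαo) (-(M:ℤ))).symm
  -- identify each term
  have step2 : ∀ e ∈ Finset.range n, G n α (-(M:ℤ) + e)
      = (∑ j ∈ Finset.range (α + 1), (α.choose j : ℝ) *
          Real.cos ((2 * j + 3) * ((((-(M:ℤ) + e : ℤ)):ℝ) * π / n))) / 2 ^ α := by
    intro e he
    have helt := Finset.mem_range.mp he
    set d : ℤ := -(M:ℤ) + e with hd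
    have hdlo : -(M:ℤ) ≤ d := by omega
    have hdhi : d ≤ (M:ℤ) := by omega
    have h1 : -(M:ℝ) ≤ (d:ℝ) := by exact_mod_cast hdlo
    have h2 : (d:ℝ) ≤ (M:ℝ) := by exact_mod_cast hdhi
    have hMn : 2*(M:ℝ)+1 = (n:ℝ) := by exact_mod_cast hM.symm
    have hπ := Real.pi_pos
    have habs : |Real.cos ((d:ℝ) * π / n)| = Real.cos ((d:ℝ) * π / n) := by
      apply abs_of_nonneg
      apply Real.cos_nonneg_of_mem_Icc
      constructor
      · rw [le_div_iff₀ hnR]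
        nlinarith [mul_nonneg (by linarith : (0:ℝ) ≤ (d:ℝ) + M) hπ.le]
      · rw [div_le_iff₀ hnR]
        nlinarith [mul_nonneg (by linarith : (0:ℝ) ≤ (M:ℝ) - d) hπ.le]
    unfold G
    rw [habs]
    have harg : ((α:ℝ)+3) * (d:ℝ) * π / n = ((α:ℝ)+3) * ((d:ℝ) * π / n) := by ring
    rw [harg, cos_pow_mul_cos α 3 ((d:ℝ) * π / n)]
  rw [step1, Finset.sum_congr rfl step2, ← Finset.sum_div, Finset.sum_comm]
  -- apply Dirichlet per j
  have key_j : ∀ j ∈ Finset.range (α+1),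
      ∑ e ∈ Finset.range n, (α.choose j : ℝ) *
          Real.cos ((2 * j + 3) * ((((-(M:ℤ) + e : ℤ)):ℝ) * π / n))
      = (α.choose j : ℝ) * ((-1:ℝ)^(j+1) / Real.sin ((2*j+3) * π / (2*n))) := by
    intro j hj
    have hjα : j ≤ α := Nat.lt_succ_iff.mp (Finset.mem_range.mp hj)
    rw [← Finset.mul_sum]
    congr 1
    have hshape : ∀ e ∈ Finset.range n,
        Real.cos ((2 * (j:ℝ) + 3) * ((((-(M:ℤ) + e : ℤ)):ℝ) * π / n))
        = Real.cos ((2*(j:ℝ)+3) * ((e:ℝ) - ((n:ℝ)-1)/2) * π / n) := by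
      intro e _
      congr 1
      push_cast
      rw [hMreal]
      ring
    rw [Finset.sum_congr rfl hshape]
    have hq := dirichlet n hn0 (2*(j:ℝ)+3)
    rw [show (2*(j:ℝ)+3) * π / 2 = (2*(j:ℝ)+3) * (π/2) by ring] at hq
    rw [show (2*(j:ℝ)+3) * (π/2) = (2*(j:ℝ)+3) * π / 2 by ring] at hq
    rw [sin_odd_half_pi j] at hq
    have hsin_pos : 0 < Real.sin ((2*(j:ℝ)+3)*π/(2*n)) := by
      apply Real.sin_pos_of_pos_of_lt_pi
      · positivity
      · rw [div_lt_iff₀ (by positivity : (0:ℝ) < 2*n)]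
        have hcast : (α:ℝ) + 4 ≤ n := by exact_mod_cast hαn
        have hjc : (j:ℝ) ≤ α := by exact_mod_cast hjα
        nlinarith [Real.pi_pos]
    rw [eq_div_iff hsin_pos.ne']
    nlinarith [hq]
  rw [Finset.sum_congr rfl key_j]
  -- finish: the sum is -T / 2^α with T > 0
  have hT := T_pos n α hα1 hαn hαo
  have hrw : ∑ j ∈ Finset.range (α+1),
      (α.choose j : ℝ) * ((-1:ℝ)^(j+1) / Real.sin ((2*j+3) * π / (2*n)))
      = -(∑ j ∈ Finset.range (α+1),
          (-1:ℝ)^j * (α.choose j) / Real.sin ((2*j+3) * π / (2*n))) := by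
    rw [← Finset.sum_neg_distrib]
    refine Finset.sum_congr rfl fun j _ => ?_
    rw [pow_succ]
    ring
  rw [hrw]
  apply div_neg_of_neg_of_pos
  · linarith
  · positivity

lemma bern (n : ℕ) {ε : ℝ} (h0 : 0 ≤ ε) (h1 : ε ≤ 1) :
    (1+ε)^n ≤ 1 + ε * (2^n - 1) := by
  induction n with
  | zero => simp
  | succ n ih =>
    have h2 : (0:ℝ) ≤ 2^n - 1 := by
      have : (1:ℝ) ≤ 2^n := one_le_pow₀ (by norm_num)
      linarith
    calc (1+ε)^(n+1) = (1+ε)^n * (1+ε) := by ring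
      _ ≤ (1 + ε * (2^n - 1)) * (1+ε) := by
          apply mul_le_mul_of_nonneg_right ih (by linarith)
      _ = 1 + ε * (2^n - 1) + ε + ε^2 * (2^n-1) := by ring
      _ ≤ 1 + ε * (2^n - 1) + ε + ε * (2^n-1) := by nlinarith [mul_nonneg (mul_nonneg h0 (by linarith : (0:ℝ) ≤ 1 - ε)) h2]
      _ = 1 + ε * (2*2^n - 1) := by ring
      _ = 1 + ε * (2^(n+1) - 1) := by ring

end Aux

/-- For odd `n ≥ 5` and `C_{n,ε} = [cos((i-j)π/n)] + ε I_n` with `ε > 0` small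
enough, for every even integer `k` with `2 ≤ k ≤ n-3` the matrix
`[|(C_{n,ε})_{ij}|^{k-1}]` is not positive semi-definite. -/
theorem abs_hadamard_power_cos_not_psd_at_odd_integers_odd_case (n : ℕ) (hn : 5 ≤ n)
    (hno : Odd n) :
    ∃ ε₀ > (0 : ℝ), ∀ ε : ℝ, 0 < ε → ε < ε₀ →
      ∀ k : ℕ, Even k → 2 ≤ k → k + 3 ≤ n →
        ¬ (absHadamardPower
            (Matrix.of fun i j : Fin n =>
              Real.cos (((i : ℝ) - (j : ℝ)) * Real.pi / (n : ℝ)) +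
                (if i = j then ε else 0))
            ((k : ℝ) - 1)).PosSemidef := by
  have hn0 : 0 < n := by omega
  set K : Finset ℕ := (Finset.range n).filter (fun a => Odd a ∧ a + 4 ≤ n) with hK
  have hK1 : 1 ∈ K := by
    rw [hK, Finset.mem_filter, Finset.mem_range]
    exact ⟨by omega, odd_one, by omega⟩
  set δ : ℝ := K.inf' ⟨1, hK1⟩ (fun a => -(∑ v ∈ Finset.range n, G n a (v:ℤ))) with hδ
  have hδpos : 0 < δ := by
    rw [hδ]; refine (Finset.lt_inf'_iff ..).2 ?_
    intro a ha
    rw [hK, Finset.mem_filter] at ha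
    obtain ⟨-, hao, han⟩ := ha
    have := S_neg n a hn hno hao.pos hao han
    linarith
  refine ⟨min 1 (δ / 2^n), by positivity, ?_⟩
  intro ε hε0 hεlt k hke hk2 hkn hpsd
  set α : ℕ := k - 1 with hα
  have hαo : Odd α := Nat.Even.sub_odd (by omega) hke odd_one
  have hα1 : 1 ≤ α := by omega
  have hαn : α + 4 ≤ n := by omega
  have hαR : ((α:ℕ):ℝ) = (k:ℝ) - 1 := by
    have : (α:ℕ) + 1 = k := by omega
    push_cast [← this]; ring
  set c : ℝ := (1+ε)^α - 1 with hc
  have hc0 : 0 ≤ c := by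
    rw [hc]; have : (1:ℝ) ≤ (1+ε)^α := one_le_pow₀ (by linarith); linarith
  have hcδ : c < δ := by
    have hε1 : ε ≤ 1 := le_of_lt (lt_of_lt_of_le hεlt (min_le_left _ _))
    have h1 : (1+ε)^α ≤ (1+ε)^n := pow_le_pow_right₀ (by linarith) (by omega)
    have h2 := bern n hε0.le hε1
    have h3 : ε * (2^n - 1) < δ := by
      have hεδ : ε < δ / 2^n := lt_of_lt_of_le hεlt (min_le_right _ _)
      have h2n : (0:ℝ) < 2^n := by positivity
      have := (lt_div_iff₀ h2n).mp hεδ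
      nlinarith
    rw [hc]; linarith
  -- the test vectors
  set x : Fin n → ℝ := fun i => Real.cos (((α:ℝ)+3) * (i:ℝ) * π / n) with hx
  set y : Fin n → ℝ := fun i => Real.sin (((α:ℝ)+3) * (i:ℝ) * π / n) with hy
  set A : Matrix (Fin n) (Fin n) ℝ := absHadamardPower
      (Matrix.of fun i j : Fin n =>
        Real.cos (((i : ℝ) - (j : ℝ)) * Real.pi / (n : ℝ)) +
          (if i = j then ε else 0)) ((k : ℝ) - 1) with hA
  -- entries
  have entry : ∀ i j : Fin n, A i j
      = |Real.cos (((((i:ℤ) - (j:ℤ)):ℤ):ℝ) * π / n)| ^ α + (if i = j then c else 0) := by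
    intro i j
    rw [hA]
    show |Real.cos (((i : ℝ) - (j : ℝ)) * π / n) + (if i = j then ε else 0)| ^ ((k:ℝ)-1)
      = _
    rw [← hαR, Real.rpow_natCast]
    by_cases hij : i = j
    · subst hij
      simp only [eq_self_iff_true, if_true, sub_self, Int.cast_zero, zero_mul, zero_div,
        Real.cos_zero]
      rw [abs_of_pos (by linarith : (0:ℝ) < 1 + ε), abs_one, one_pow, hc]
      ring
    · simp only [if_neg hij, add_zero]
      congr 2
      push_cast
      ring
  -- quadratic form
  have hQx := hpsd.dotProduct_mulVec_nonneg x
  have hQy := hpsd.dotProduct_mulVec_nonneg y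
  rw [show star x = x from rfl] at hQx
  rw [show star y = y from rfl] at hQy
  have hdot : ∀ z : Fin n → ℝ, z ⬝ᵥ A.mulVec z = ∑ i : Fin n, ∑ j : Fin n, A i j * (z i * z j) := by
    intro z
    simp only [dotProduct, Matrix.mulVec, Finset.mul_sum]
    refine Finset.sum_congr rfl fun i _ => ?_
    refine Finset.sum_congr rfl fun j _ => ?_
    ring
  -- per-term identity
  have term : ∀ i j : Fin n, A i j * (x i * x j) + A i j * (y i * y j)
      = G n α ((i:ℤ) - (j:ℤ)) + (if i = j then c else 0) := by
    intro i j
    have trig : x i * x j + y i * y j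
        = Real.cos (((α:ℝ)+3) * (((((i:ℤ) - (j:ℤ)):ℤ)):ℝ) * π / n) := by
      rw [hx, hy, ← Real.cos_sub]
      congr 1
      push_cast
      ring
    rw [entry i j]
    by_cases hij : i = j
    · subst hij
      simp only [eq_self_iff_true, if_true, sub_self]
      have hone : x i * x i + y i * y i = 1 := by
        rw [hx, hy]
        have := Real.sin_sq_add_cos_sq (((α:ℝ)+3) * ((i:Fin n):ℝ) * π / n)
        nlinarith [this]
      calc (|Real.cos ((((0:ℤ)):ℝ) * π / n)| ^ α + c) * (x i * x i)
            + (|Real.cos ((((0:ℤ)):ℝ) * π / n)| ^ α + c) * (y i * y i)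
          = (|Real.cos ((((0:ℤ)):ℝ) * π / n)| ^ α + c) * (x i * x i + y i * y i) := by ring
        _ = |Real.cos ((((0:ℤ)):ℝ) * π / n)| ^ α + c := by rw [hone, mul_one]
        _ = G n α 0 + c := by
            unfold G
            simp
    · simp only [if_neg hij, add_zero]
      calc |Real.cos (((((i:ℤ) - (j:ℤ) : ℤ)):ℝ) * π / n)| ^ α * (x i * x j)
            + |Real.cos (((((i:ℤ) - (j:ℤ) : ℤ)):ℝ) * π / n)| ^ α * (y i * y j)
          = |Real.cos (((((i:ℤ) - (j:ℤ) : ℤ)):ℝ) * π / n)| ^ α * (x i * x j + y i * y j) := by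
            ring
        _ = G n α ((i:ℤ) - (j:ℤ)) := by
            rw [trig]
            unfold G
            rfl
  -- total quadratic form
  have key : (x ⬝ᵥ A *ᵥ x) + (y ⬝ᵥ A *ᵥ y)
      = n * (∑ v ∈ Finset.range n, G n α (v:ℤ)) + n * c := by
    rw [hdot x, hdot y, ← Finset.sum_add_distrib]
    have h1 : ∀ i : Fin n, (∑ j : Fin n, A i j * (x i * x j)) + ∑ j : Fin n, A i j * (y i * y j)
        = ∑ j : Fin n, (G n α ((i:ℤ) - (j:ℤ)) + (if i = j then c else 0)) := by
      intro i
      rw [← Finset.sum_add_distrib]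
      exact Finset.sum_congr rfl fun j _ => term i j
    rw [Finset.sum_congr rfl fun i _ => h1 i]
    have h2 : ∑ i : Fin n, ∑ j : Fin n, (G n α ((i:ℤ) - (j:ℤ)) + (if i = j then c else 0))
        = (∑ i : Fin n, ∑ j : Fin n, G n α ((i:ℤ) - (j:ℤ)))
          + ∑ i : Fin n, ∑ j : Fin n, (if i = j then c else 0) := by
      rw [← Finset.sum_add_distrib]
      exact Finset.sum_congr rfl fun i _ => Finset.sum_add_distrib
    rw [h2, qf_sum n (G n α) (G_periodic n α hn0 hαo)]
    congr 1
    have h3 : ∀ i : Fin n, ∑ j : Fin n, (if i = j then c else 0) = c := by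
      intro i
      rw [Finset.sum_ite_eq Finset.univ i (fun _ => c)]
      simp
    rw [Finset.sum_congr rfl fun i _ => h3 i, Finset.sum_const]
    simp [mul_comm]
  -- contradiction
  have hαK : α ∈ K := by
    rw [hK, Finset.mem_filter, Finset.mem_range]
    exact ⟨by omega, hαo, hαn⟩
  have hSδ : δ ≤ -(∑ v ∈ Finset.range n, G n α (v:ℤ)) := by
    rw [hδ]
    exact Finset.inf'_le _ hαK
  have hnR : (0:ℝ) < n := by exact_mod_cast hn0
  have hneg : (∑ v ∈ Finset.range n, G n α (v:ℤ)) + c < 0 := by linarith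
  nlinarith [hQx, hQy, key, hneg, hnR]
end

section
/- Let A be an n×n real positive semi-definite matrix with non-negative entries. If there exists δ > 0 such that A^{∘α} is positive semi-definite for all α ∈ [0, δ], then A^{∘α} is positive semi-definite for every α ≥ 0 (that is, S_A = [0, ∞)). -/
/-!
For non-negative entries `A^{∘(α+β)} = A^{∘α} ⊙ A^{∘β}`, so by the Schur product theorem the set
of `α ≥ 0` with `A^{∘α}` positive semidefinite is closed under addition. An additively closed set
of reals containing `[0, δ]` contains every `α ≥ 0`, since `α = k • (α / k)` with `α / k ≤ δ`.
-/

open Matrix Set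

theorem Set.Ici_subset_of_Icc_subset_of_add_mem {S : Set ℝ} {δ : ℝ} (hδ : 0 < δ)
    (hS : Icc 0 δ ⊆ S) (hadd : ∀ a ∈ S, ∀ b ∈ S, a + b ∈ S) : Ici 0 ⊆ S := by
  have hmul : ∀ b ∈ S, ∀ k : ℕ, ((k : ℝ) + 1) * b ∈ S := by
    intro b hb k
    induction k with
    | zero => simpa using hb
    | succ k ih =>
      convert hadd _ ih b hb using 1
      push_cast
      ring
  intro x hx
  obtain ⟨k, hk⟩ := exists_nat_ge (x / δ)
  have hk₀ : (0 : ℝ) < k + 1 := by positivity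
  have hfrac : x / (k + 1) ∈ Icc 0 δ := by
    refine ⟨div_nonneg hx (by linarith), ?_⟩
    rw [div_le_iff₀ hk₀]
    rw [div_le_iff₀ hδ] at hk
    nlinarith
  simpa [mul_div_cancel₀ x hk₀.ne'] using hmul _ (hS hfrac) k

theorem hadamardPower_add {n : ℕ} {A : Matrix (Fin n) (Fin n) ℝ} (hnn : ∀ i j, 0 ≤ A i j)
    {α β : ℝ} (hα : 0 ≤ α) (hβ : 0 ≤ β) :
    hadamardPower A (α + β) = hadamardPower A α ⊙ hadamardPower A β := by
  ext i j
  exact Real.rpow_add_of_nonneg (hnn i j) hα hβ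

theorem SA_all_of_initial_interval_general (n : ℕ) (A : Matrix (Fin n) (Fin n) ℝ)
    (hnn : ∀ i j, 0 ≤ A i j)
    (h : ∃ δ > (0 : ℝ), ∀ α : ℝ, 0 ≤ α → α ≤ δ → (hadamardPower A α).PosSemidef) :
    ∀ α : ℝ, 0 ≤ α → (hadamardPower A α).PosSemidef := by
  obtain ⟨δ, hδ, hδS⟩ := h
  let S : Set ℝ := {α | 0 ≤ α ∧ (hadamardPower A α).PosSemidef}
  have hS : Icc 0 δ ⊆ S := fun α hα => ⟨hα.1, hδS α hα.1 hα.2⟩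
  have hadd : ∀ a ∈ S, ∀ b ∈ S, a + b ∈ S := fun a ha b hb =>
    ⟨add_nonneg ha.1 hb.1, hadamardPower_add hnn ha.1 hb.1 ▸ ha.2.hadamard hb.2⟩
  exact fun α hα => (Set.Ici_subset_of_Icc_subset_of_add_mem hδ hS hadd hα).2

/-- For a p.s.d. matrix `A` with non-negative entries: if `A^{∘α}` is p.s.d. for all
`α ∈ [0, δ]` for some `δ > 0`, then `A^{∘α}` is p.s.d. for every `α ≥ 0`. -/
theorem SA_all_of_initial_interval (n : ℕ) (A : Matrix (Fin n) (Fin n) ℝ)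
    (hA : A.PosSemidef) (hnn : ∀ i j, 0 ≤ A i j)
    (h : ∃ δ > (0 : ℝ), ∀ α : ℝ, 0 ≤ α → α ≤ δ → (hadamardPower A α).PosSemidef) :
    ∀ α : ℝ, 0 ≤ α → (hadamardPower A α).PosSemidef :=
  SA_all_of_initial_interval_general n A hnn h
end

section
/- Let A be a 3×3 real positive semi-definite matrix with non-negative entries. Then there exists ρ ∈ [0, 1] such that for every α ≥ 0, the matrix A^{∘α} := [a_ij^α] is positive semi-definite if and only if α = 0 or α ≥ ρ; that is, S_A = {0} ∪ [ρ, ∞). -/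
open Real Set Matrix

-- The quadratic form of `!![a, d; d, b]`.
def binaryForm (a b d x y : ℝ) : ℝ := a * x ^ 2 + 2 * d * x * y + b * y ^ 2

theorem forall_binaryForm_nonneg_iff {a b d : ℝ} :
    (∀ x y, 0 ≤ binaryForm a b d x y) ↔ 0 ≤ a ∧ 0 ≤ b ∧ d ^ 2 ≤ a * b := by
  unfold binaryForm
  constructor
  · intro h
    have ha : 0 ≤ a := by simpa using h 1 0
    have hb : 0 ≤ b := by simpa using h 0 1
    refine ⟨ha, hb, ?_⟩
    rcases ha.eq_or_lt with rfl | ha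
    · nlinarith [h (b + 1) (-d)]
    · nlinarith [h (-d) a]
  · rintro ⟨ha, hb, hd⟩ x y
    rcases ha.eq_or_lt with rfl | ha
    · have : d = 0 := by nlinarith
      subst this
      nlinarith [mul_nonneg hb (sq_nonneg y)]
    · nlinarith [sq_nonneg (a * x + d * y), mul_nonneg (sub_nonneg.2 hd) (sq_nonneg y)]

theorem binaryForm_hadamard_nonneg {a b d a' b' d' : ℝ} (h : ∀ x y, 0 ≤ binaryForm a b d x y)
    (h' : ∀ x y, 0 ≤ binaryForm a' b' d' x y) (x y : ℝ) :
    0 ≤ binaryForm (a * a') (b * b') (d * d') x y := by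
  obtain ⟨ha, hb, hd⟩ := forall_binaryForm_nonneg_iff.1 h
  obtain ⟨ha', hb', hd'⟩ := forall_binaryForm_nonneg_iff.1 h'
  refine forall_binaryForm_nonneg_iff.2 ⟨mul_nonneg ha ha', mul_nonneg hb hb', ?_⟩ x y
  calc (d * d') ^ 2 = d ^ 2 * d' ^ 2 := mul_pow d d' 2
    _ ≤ (a * b) * (a' * b') := mul_le_mul hd hd' (sq_nonneg _) (mul_nonneg ha hb)
    _ = a * a' * (b * b') := by ring

theorem binaryForm_rpow_nonneg {a b d β : ℝ} (h : ∀ x y, 0 ≤ binaryForm a b d x y) (hd : 0 ≤ d)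
    (hβ : 0 ≤ β) (x y : ℝ) : 0 ≤ binaryForm (a ^ β) (b ^ β) (d ^ β) x y := by
  obtain ⟨ha, hb, hdab⟩ := forall_binaryForm_nonneg_iff.1 h
  refine forall_binaryForm_nonneg_iff.2 ⟨rpow_nonneg ha β, rpow_nonneg hb β, ?_⟩ x y
  calc (d ^ β) ^ 2 = (d ^ 2) ^ β := by rw [← rpow_mul_natCast hd, mul_comm, rpow_natCast_mul hd]
    _ ≤ (a * b) ^ β := rpow_le_rpow (sq_nonneg d) hdab hβ
    _ = a ^ β * b ^ β := mul_rpow ha hb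

theorem hasDerivAt_rpow_add_mul {α : ℝ} (hα : 1 ≤ α) (p q t : ℝ) :
    HasDerivAt (fun t => (p + t * q) ^ α) (α * (p + t * q) ^ (α - 1) * q) t := by
  convert ((((hasDerivAt_id' t).mul_const q).const_add p).rpow_const (Or.inr hα)) using 1
  ring

theorem binaryForm_rpow_le_rpow_add {a b d a' b' d' α : ℝ} (hα : 1 ≤ α) (hd : 0 ≤ d)
    (hd' : 0 ≤ d + d') (h : ∀ x y, 0 ≤ binaryForm a b d x y)
    (h' : ∀ x y, 0 ≤ binaryForm a' b' d' x y) (x y : ℝ) :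
    binaryForm (a ^ α) (b ^ α) (d ^ α) x y ≤
      binaryForm ((a + a') ^ α) ((b + b') ^ α) ((d + d') ^ α) x y := by
  set G : ℝ → ℝ := fun t => binaryForm ((a + t * a') ^ α) ((b + t * b') ^ α) ((d + t * d') ^ α) x y
  set G' : ℝ → ℝ := fun t => α * binaryForm ((a + t * a') ^ (α - 1) * a')
    ((b + t * b') ^ (α - 1) * b') ((d + t * d') ^ (α - 1) * d') x y
  have hG : ∀ t, HasDerivAt G (G' t) t := fun t => by
    refine ((((hasDerivAt_rpow_add_mul hα a a' t).mul_const (x ^ 2)).add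
      ((((hasDerivAt_rpow_add_mul hα d d' t).const_mul 2).mul_const x).mul_const y)).add
      ((hasDerivAt_rpow_add_mul hα b b' t).mul_const (y ^ 2))).congr_deriv ?_
    simp only [G', binaryForm]
    ring
  have hG'_nonneg : ∀ t ∈ Icc (0 : ℝ) 1, 0 ≤ G' t := by
    rintro t ⟨ht₀, ht₁⟩
    have hm : ∀ u v, 0 ≤ binaryForm (a + t * a') (b + t * b') (d + t * d') u v := fun u v => by
      have hsplit : binaryForm (a + t * a') (b + t * b') (d + t * d') u v =
          binaryForm a b d u v + t * binaryForm a' b' d' u v := by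
        simp only [binaryForm]; ring
      rw [hsplit]
      exact add_nonneg (h u v) (mul_nonneg ht₀ (h' u v))
    have hmd : 0 ≤ d + t * d' := by nlinarith
    exact mul_nonneg (by linarith)
      (binaryForm_hadamard_nonneg (binaryForm_rpow_nonneg hm hmd (by linarith)) h' x y)
  have hmono : MonotoneOn G (Icc 0 1) :=
    monotoneOn_of_hasDerivWithinAt_nonneg (convex_Icc 0 1)
      (fun t _ => (hG t).continuousAt.continuousWithinAt) (fun t _ => (hG t).hasDerivWithinAt)
      (fun t ht => hG'_nonneg t (interior_subset ht))
  simpa [G] using hmono (left_mem_Icc.2 zero_le_one) (right_mem_Icc.2 zero_le_one) zero_le_one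

-- The quadratic form of `!![a, d, e; d, b, f; e, f, c]`.
def ternaryForm (a b c d e f x y z : ℝ) : ℝ :=
  binaryForm a b d x y + 2 * (e * x + f * y) * z + c * z ^ 2

theorem ternaryForm_eq_sq_div_add_binaryForm {a b c d e f : ℝ} (hc : c ≠ 0) (x y z : ℝ) :
    ternaryForm a b c d e f x y z = (e * x + f * y + c * z) ^ 2 / c +
      binaryForm (a - e ^ 2 / c) (b - f ^ 2 / c) (d - e * f / c) x y := by
  simp only [ternaryForm, binaryForm]
  field_simp
  ring

theorem binaryForm_schurComplement_nonneg {a b c d e f : ℝ} (hc : c ≠ 0)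
    (h : ∀ x y z, 0 ≤ ternaryForm a b c d e f x y z) (x y : ℝ) :
    0 ≤ binaryForm (a - e ^ 2 / c) (b - f ^ 2 / c) (d - e * f / c) x y := by
  have hz : e * x + f * y + c * (-(e * x + f * y) / c) = 0 := by field_simp; ring
  have := h x y (-(e * x + f * y) / c)
  rwa [ternaryForm_eq_sq_div_add_binaryForm hc, hz, zero_pow two_ne_zero, zero_div,
    zero_add] at this

theorem ternaryForm_rpow_nonneg {a b c d e f α : ℝ} (hα : 1 ≤ α) (hd : 0 ≤ d) (he : 0 ≤ e)
    (hf : 0 ≤ f) (h : ∀ x y z, 0 ≤ ternaryForm a b c d e f x y z) (x y z : ℝ) :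
    0 ≤ ternaryForm (a ^ α) (b ^ α) (c ^ α) (d ^ α) (e ^ α) (f ^ α) x y z := by
  have hc : 0 ≤ c := by simpa [ternaryForm, binaryForm] using h 0 0 1
  rcases hc.eq_or_lt with rfl | hc
  · have hac : ∀ x z, 0 ≤ binaryForm a 0 e x z := fun x z => by
      have := h x 0 z; simp only [ternaryForm, binaryForm] at this ⊢; linarith
    have hbc : ∀ y z, 0 ≤ binaryForm b 0 f y z := fun y z => by
      have := h 0 y z; simp only [ternaryForm, binaryForm] at this ⊢; linarith
    obtain rfl : e = 0 := by simpa using (forall_binaryForm_nonneg_iff.1 hac).2.2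
    obtain rfl : f = 0 := by simpa using (forall_binaryForm_nonneg_iff.1 hbc).2.2
    have hab : ∀ x y, 0 ≤ binaryForm a b d x y := fun x y => by simpa [ternaryForm] using h x y 0
    simpa [ternaryForm, zero_rpow (by linarith : α ≠ 0)] using
      binaryForm_rpow_nonneg hab hd (by linarith) x y
  · have hRankOne : ∀ x y, 0 ≤ binaryForm (e ^ 2 / c) (f ^ 2 / c) (e * f / c) x y := fun x y => by
      have : binaryForm (e ^ 2 / c) (f ^ 2 / c) (e * f / c) x y = (e * x + f * y) ^ 2 / c := by
        simp only [binaryForm]; field_simp; ring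
      rw [this]; positivity
    have hmono := binaryForm_rpow_le_rpow_add hα (by positivity) (by simpa using hd) hRankOne
      (binaryForm_schurComplement_nonneg hc.ne' h) x y
    simp only [add_sub_cancel] at hmono
    have hcα : 0 < c ^ α := rpow_pos_of_pos hc α
    have hpow : ∀ {u v : ℝ}, 0 ≤ u → 0 ≤ v → (u * v / c) ^ α = u ^ α * v ^ α / c ^ α :=
      fun hu hv => by rw [div_rpow (mul_nonneg hu hv) hc.le, mul_rpow hu hv]
    rw [sq, sq, hpow he he, hpow hf hf, hpow he hf] at hmono
    rw [ternaryForm_eq_sq_div_add_binaryForm hcα.ne']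
    have := div_nonneg (sq_nonneg (e ^ α * x + f ^ α * y + c ^ α * z)) hcα.le
    simp only [binaryForm, sq] at hmono this ⊢
    linarith

theorem posSemidef_fin_three_iff {M : Matrix (Fin 3) (Fin 3) ℝ} :
    M.PosSemidef ↔ M.IsHermitian ∧
      ∀ x y z, 0 ≤ ternaryForm (M 0 0) (M 1 1) (M 2 2) (M 0 1) (M 0 2) (M 1 2) x y z := by
  rw [posSemidef_iff_dotProduct_mulVec]
  refine and_congr_right fun hM => ?_
  have h10 : M 1 0 = M 0 1 := by simpa using hM.apply 0 1
  have h20 : M 2 0 = M 0 2 := by simpa using hM.apply 0 2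
  have h21 : M 2 1 = M 1 2 := by simpa using hM.apply 1 2
  have hform : ∀ v : Fin 3 → ℝ, star v ⬝ᵥ M *ᵥ v =
      ternaryForm (M 0 0) (M 1 1) (M 2 2) (M 0 1) (M 0 2) (M 1 2) (v 0) (v 1) (v 2) := fun v => by
    simp only [star_trivial, dotProduct, mulVec, Fin.sum_univ_three, ternaryForm, binaryForm,
      h10, h20, h21]
    ring
  simp only [hform]
  exact ⟨fun h x y z => by simpa using h ![x, y, z], fun h v => h _ _ _⟩

theorem Matrix.isClosed_setOf_posSemidef {ι : Type*} [Fintype ι] :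
    IsClosed {M : Matrix ι ι ℝ | M.PosSemidef} := by
  simp only [posSemidef_iff_dotProduct_mulVec, ofPred_and, ofPred_forall]
  exact (isClosed_eq continuous_id.matrix_conjTranspose continuous_id).inter <|
    isClosed_iInter fun x => isClosed_le continuous_const <|
      continuous_const.dotProduct (continuous_id.matrix_mulVec continuous_const)

section HadamardPower

variable {n : ℕ} {A : Matrix (Fin n) (Fin n) ℝ}

theorem isHermitian_hadamardPower (hA : A.IsHermitian) (α : ℝ) :
    (hadamardPower A α).IsHermitian := by
  ext i j
  simp [hadamardPower, ← hA.apply i j]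

theorem hadamardPower_one (A : Matrix (Fin n) (Fin n) ℝ) : hadamardPower A 1 = A := by
  ext i j
  simp [hadamardPower]

theorem hadamardPower_hadamardPower (hnn : ∀ i j, 0 ≤ A i j) (β γ : ℝ) :
    hadamardPower (hadamardPower A β) γ = hadamardPower A (β * γ) := by
  ext i j
  simp [hadamardPower, rpow_mul (hnn i j)]

theorem posSemidef_hadamardPower_zero (A : Matrix (Fin n) (Fin n) ℝ) :
    (hadamardPower A 0).PosSemidef := by
  convert posSemidef_vecMulVec_self_star (fun _ : Fin n => (1 : ℝ))
  ext i j
  simp [hadamardPower, vecMulVec_apply]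

theorem continuousAt_hadamardPower {α : ℝ} (hα : α ≠ 0) : ContinuousAt (hadamardPower A) α :=
  continuousAt_pi.2 fun _ => continuousAt_pi.2 fun _ => continuousAt_const_rpow' hα

end HadamardPower

theorem exists_mem_Icc_forall_mem_iff_le {P : Set ℝ} (hP : P ⊆ Ioi 0) (hP₁ : 1 ∈ P)
    (hup : IsUpperSet P) (hcl : ∀ ρ > 0, Ioi ρ ⊆ P → ρ ∈ P) :
    ∃ ρ ∈ Icc (0 : ℝ) 1, ∀ α > 0, α ∈ P ↔ ρ ≤ α := by
  have hbdd : BddBelow P := ⟨0, fun β hβ => (hP hβ).le⟩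
  have hIoi : Ioi (sInf P) ⊆ P := fun α hα =>
    let ⟨β, hβ, hβα⟩ := exists_lt_of_csInf_lt ⟨1, hP₁⟩ hα
    hup hβα.le hβ
  refine ⟨sInf P, ⟨le_csInf ⟨1, hP₁⟩ fun β hβ => (hP hβ).le, csInf_le hbdd hP₁⟩,
    fun α hα => ⟨fun h => csInf_le hbdd h, fun h => ?_⟩⟩
  rcases h.eq_or_lt with rfl | h
  · exact hcl _ hα hIoi
  · exact hIoi h

theorem exists_posSemidef_hadamardPower_iff {n : ℕ}
    (hFH : ∀ B : Matrix (Fin n) (Fin n) ℝ, B.PosSemidef → (∀ i j, 0 ≤ B i j) →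
      ∀ α, 1 ≤ α → (hadamardPower B α).PosSemidef)
    {A : Matrix (Fin n) (Fin n) ℝ} (hA : A.PosSemidef) (hnn : ∀ i j, 0 ≤ A i j) :
    ∃ ρ ∈ Icc (0 : ℝ) 1, ∀ α : ℝ, 0 ≤ α →
      ((hadamardPower A α).PosSemidef ↔ α = 0 ∨ ρ ≤ α) := by
  set P := {α : ℝ | 0 < α ∧ (hadamardPower A α).PosSemidef}
  have hup : IsUpperSet P := by
    rintro β γ hβγ ⟨hβ, hAβ⟩
    refine ⟨hβ.trans_le hβγ, ?_⟩
    have := hFH _ hAβ (fun i j => rpow_nonneg (hnn i j) β) (γ / β) ((one_le_div hβ).2 hβγ)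
    rwa [hadamardPower_hadamardPower hnn, mul_div_cancel₀ _ hβ.ne'] at this
  have hcl : ∀ ρ > 0, Ioi ρ ⊆ P → ρ ∈ P := fun ρ hρ hsub =>
    ⟨hρ, isClosed_setOf_posSemidef.mem_of_tendsto
      ((continuousAt_hadamardPower hρ.ne').mono_left nhdsWithin_le_nhds)
      (eventually_nhdsWithin_of_forall fun α hα => (hsub hα).2)⟩
  obtain ⟨ρ, hρ, hP⟩ := exists_mem_Icc_forall_mem_iff_le (fun _ h => h.1)
    (show (1 : ℝ) ∈ P from ⟨one_pos, by rwa [hadamardPower_one]⟩) hup hcl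
  refine ⟨ρ, hρ, fun α hα => ?_⟩
  rcases hα.eq_or_lt with rfl | hα
  · simp [posSemidef_hadamardPower_zero]
  · rw [← hP α hα]
    simp [P, hα, hα.ne']

theorem posSemidef_hadamardPower_of_one_le {A : Matrix (Fin 3) (Fin 3) ℝ} (hA : A.PosSemidef)
    (hnn : ∀ i j, 0 ≤ A i j) {α : ℝ} (hα : 1 ≤ α) : (hadamardPower A α).PosSemidef := by
  obtain ⟨hH, hq⟩ := posSemidef_fin_three_iff.1 hA
  exact posSemidef_fin_three_iff.2 ⟨isHermitian_hadamardPower hH α,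
    ternaryForm_rpow_nonneg hα (hnn 0 1) (hnn 0 2) (hnn 1 2) hq⟩

/-- For a `3 × 3` p.s.d. matrix `A` with non-negative entries, there is `ρ ∈ [0, 1]`
such that for `α ≥ 0`, `A^{∘α}` is p.s.d. iff `α = 0` or `α ≥ ρ`; that is,
`S_A = {0} ∪ [ρ, ∞)`. -/
theorem SA_eq_zero_union_Ici_of_three_by_three (A : Matrix (Fin 3) (Fin 3) ℝ)
    (hA : A.PosSemidef) (hnn : ∀ i j, 0 ≤ A i j) :
    ∃ ρ ∈ Set.Icc (0 : ℝ) 1, ∀ α : ℝ, 0 ≤ α →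
      ((hadamardPower A α).PosSemidef ↔ α = 0 ∨ ρ ≤ α) :=
  exists_posSemidef_hadamardPower_iff
    (fun _ hB hBnn _ hα => posSemidef_hadamardPower_of_one_le hB hBnn hα) hA hnn
end

section
/- Let A = [a_ij] be a 3×3 real positive semi-definite matrix (entries of arbitrary sign). Then there exists ρ ∈ [0, 1] such that for every α ≥ 0, the matrix [|a_ij|^α] is positive semi-definite if and only if α = 0 or α ≥ ρ; that is, S_{|A|_∘} = {0} ∪ [ρ, ∞). -/
set_option maxHeartbeats 1600000

open Real


private lemma quad2 (a b c : ℝ) (ha : 0 ≤ a) (hc : 0 ≤ c) (h : b^2 ≤ a*c) (y z : ℝ) :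
    0 ≤ a*y^2 + 2*b*(y*z) + c*z^2 := by
  rcases eq_or_lt_of_le ha with ha0 | hapos
  · have hb : b = 0 := by nlinarith [sq_nonneg b]
    rw [hb, ← ha0]
    nlinarith [mul_nonneg hc (sq_nonneg z)]
  · nlinarith [sq_nonneg (a*y + b*z), mul_nonneg (sub_nonneg.2 h) (sq_nonneg z)]

private lemma sq_le_of_quad (a b c : ℝ)
    (h : ∀ y z : ℝ, 0 ≤ a*y^2 + 2*b*(y*z) + c*z^2) : b^2 ≤ a*c := by
  have ha : 0 ≤ a := by have := h 1 0; nlinarith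
  have hc : 0 ≤ c := by have := h 0 1; nlinarith
  rcases eq_or_lt_of_le ha with ha0 | hapos
  · rcases eq_or_lt_of_le hc with hc0 | hcpos
    · have := h b (-1); nlinarith [sq_nonneg b]
    · have := h c (-b); nlinarith
  · have := h b (-a); nlinarith


private lemma quad3 (b00 b01 b02 b11 b12 b22 : ℝ)
    (h00 : 0 ≤ b00) (h11 : 0 ≤ b11) (h22 : 0 ≤ b22)
    (m01 : b01^2 ≤ b00*b11) (m02 : b02^2 ≤ b00*b22) (m12 : b12^2 ≤ b11*b22)
    (hdet : 0 ≤ b00*b11*b22 + 2*(b01*(b02*b12)) - b00*b12^2 - b11*b02^2 - b22*b01^2)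
    (x0 x1 x2 : ℝ) :
    0 ≤ b00*x0^2 + b11*x1^2 + b22*x2^2 + 2*b01*(x0*x1) + 2*b02*(x0*x2) + 2*b12*(x1*x2) := by
  rcases eq_or_lt_of_le h00 with h0 | h0pos
  · have e01 : b01 = 0 := by nlinarith [sq_nonneg b01]
    have e02 : b02 = 0 := by nlinarith [sq_nonneg b02]
    have := quad2 b11 b12 b22 h11 h22 m12 x1 x2
    rw [← h0, e01, e02]; nlinarith [this]
  · have hA2 : 0 ≤ b00*b11 - b01^2 := by nlinarith
    have hC2 : 0 ≤ b00*b22 - b02^2 := by nlinarith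
    have hB2 : (b00*b12 - b01*b02)^2 ≤ (b00*b11 - b01^2)*(b00*b22 - b02^2) := by
      nlinarith [mul_nonneg h0pos.le hdet]
    have hq2 := quad2 _ _ _ hA2 hC2 hB2 x1 x2
    nlinarith [sq_nonneg (b00*x0 + b01*x1 + b02*x2), hq2]

/-- FitzGerald–Horn for `3 × 3`: the entrywise `t`-th power (`t ≥ 1`) of a positive
semidefinite matrix with nonnegative entries is positive semidefinite (scalar form). -/
private lemma fgh3_scalar (c00 c01 c02 c11 c12 c22 : ℝ)
    (h01 : 0 ≤ c01) (h02 : 0 ≤ c02) (h12 : 0 ≤ c12)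
    (hq : ∀ x0 x1 x2 : ℝ, 0 ≤ c00*x0^2 + c11*x1^2 + c22*x2^2
      + 2*c01*(x0*x1) + 2*c02*(x0*x2) + 2*c12*(x1*x2))
    (t : ℝ) (ht : 1 ≤ t) (x0 x1 x2 : ℝ) :
    0 ≤ c00^t*x0^2 + c11^t*x1^2 + c22^t*x2^2
      + 2*c01^t*(x0*x1) + 2*c02^t*(x0*x2) + 2*c12^t*(x1*x2) := by
  have ht0 : (0:ℝ) < t := lt_of_lt_of_le one_pos ht
  have ht1 : 0 ≤ t - 1 := by linarith
  have h00 : 0 ≤ c00 := by have := hq 1 0 0; nlinarith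
  have h11 : 0 ≤ c11 := by have := hq 0 1 0; nlinarith
  have h22 : 0 ≤ c22 := by have := hq 0 0 1; nlinarith
  have m01 : c01^2 ≤ c00*c11 := sq_le_of_quad _ _ _ (fun y z => by have := hq y z 0; nlinarith)
  have m02 : c02^2 ≤ c00*c22 := sq_le_of_quad _ _ _ (fun y z => by have := hq y 0 z; nlinarith)
  have m12 : c12^2 ≤ c11*c22 := sq_le_of_quad _ _ _ (fun y z => by have := hq 0 y z; nlinarith)
  have hsq : ∀ u : ℝ, 0 ≤ u → (u^t)^2 = (u^2)^t := by
    intro u hu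
    rw [pow_two, pow_two, mul_rpow hu hu]
  rcases eq_or_lt_of_le h22 with hz | hpos
  · -- degenerate case `c22 = 0`
    have e02 : c02 = 0 := by nlinarith [sq_nonneg c02]
    have e12 : c12 = 0 := by nlinarith [sq_nonneg c12]
    have z1 : (0:ℝ)^t = 0 := zero_rpow (ne_of_gt ht0)
    rw [e02, e12, ← hz, z1]
    have key : (c01^t)^2 ≤ c00^t * c11^t := by
      rw [hsq c01 h01, ← mul_rpow h00 h11]
      exact rpow_le_rpow (sq_nonneg c01) m01 ht0.le
    have := quad2 _ _ _ (rpow_nonneg h00 t) (rpow_nonneg h11 t) key x0 x1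
    nlinarith [this]
  · -- main case `0 < c22`
    have hD00 : 0 ≤ c00*c22 - c02^2 := by nlinarith
    have hD11 : 0 ≤ c11*c22 - c12^2 := by nlinarith
    have hCR : 0 ≤ c00*c12^2 - 2*c01*(c02*c12) + c11*c02^2 := by
      have := hq c12 (-c02) 0; nlinarith
    have hB : ∀ y z : ℝ, 0 ≤ (c00*c22 - c02^2)*y^2 + 2*(c01*c22 - c02*c12)*(y*z)
        + (c11*c22 - c12^2)*z^2 := by
      intro y z
      have hd := discrim_le_zero (a := c22) (b := 2*(c02*y + c12*z))
        (c := c00*y^2 + c11*z^2 + 2*c01*(y*z)) (fun v => by have := hq y z v; nlinarith)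
      rw [discrim] at hd
      nlinarith [hd]
    have hD01 : (c01*c22 - c02*c12)^2 ≤ (c00*c22 - c02^2)*(c11*c22 - c12^2) :=
      sq_le_of_quad _ _ _ hB
    -- interpolation function
    set G : ℝ → ℝ := fun s =>
        x0^2*(c02^2 + s*(c00*c22 - c02^2))^t
      + 2*(x0*x1)*(c02*c12 + s*(c01*c22 - c02*c12))^t
      + x1^2*(c12^2 + s*(c11*c22 - c12^2))^t
      + (x2^2*(c22*c22)^t + 2*(x0*x2)*(c02*c22)^t + 2*(x1*x2)*(c12*c22)^t) with hGdef
    have hG : ∀ s : ℝ, HasDerivAt G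
        ( x0^2*((c00*c22 - c02^2)*t*(c02^2 + s*(c00*c22 - c02^2))^(t-1))
        + 2*(x0*x1)*((c01*c22 - c02*c12)*t*(c02*c12 + s*(c01*c22 - c02*c12))^(t-1))
        + x1^2*((c11*c22 - c12^2)*t*(c12^2 + s*(c11*c22 - c12^2))^(t-1))) s := by
      intro s
      have d0 : HasDerivAt (fun s : ℝ => c02^2 + s*(c00*c22 - c02^2)) (c00*c22 - c02^2) s := by
        simpa using (hasDerivAt_id s).mul_const (c00*c22 - c02^2) |>.const_add (c02^2)
      have d1 : HasDerivAt (fun s : ℝ => c02*c12 + s*(c01*c22 - c02*c12)) (c01*c22 - c02*c12) s := by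
        simpa using (hasDerivAt_id s).mul_const (c01*c22 - c02*c12) |>.const_add (c02*c12)
      have d2 : HasDerivAt (fun s : ℝ => c12^2 + s*(c11*c22 - c12^2)) (c11*c22 - c12^2) s := by
        simpa using (hasDerivAt_id s).mul_const (c11*c22 - c12^2) |>.const_add (c12^2)
      have D0 := (d0.rpow_const (Or.inr ht)).const_mul (x0^2)
      have D1 := (d1.rpow_const (Or.inr ht)).const_mul (2*(x0*x1))
      have D2 := (d2.rpow_const (Or.inr ht)).const_mul (x1^2)
      have := ((D0.add D1).add D2).add
        (hasDerivAt_const s (x2^2*(c22*c22)^t + 2*(x0*x2)*(c02*c22)^t + 2*(x1*x2)*(c12*c22)^t))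
      exact this.congr_deriv (by ring)
    have hmono : MonotoneOn G (Set.Icc (0:ℝ) 1) := by
      apply monotoneOn_of_deriv_nonneg (convex_Icc 0 1)
      · exact fun s _ => (hG s).continuousAt.continuousWithinAt
      · exact fun s _ => (hG s).differentiableAt.differentiableWithinAt
      · intro s hs
        rw [interior_Icc] at hs
        obtain ⟨hs0', hs1'⟩ := hs
        have hs0 : (0:ℝ) ≤ s := hs0'.le
        have hs1 : s ≤ 1 := hs1'.le
        rw [(hG s).deriv]
        have hm0n : 0 ≤ c02^2 + s*(c00*c22 - c02^2) :=
          add_nonneg (sq_nonneg _) (mul_nonneg hs0 hD00)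
        have hm2n : 0 ≤ c12^2 + s*(c11*c22 - c12^2) :=
          add_nonneg (sq_nonneg _) (mul_nonneg hs0 hD11)
        have hm1n : 0 ≤ c02*c12 + s*(c01*c22 - c02*c12) := by
          nlinarith [mul_nonneg (sub_nonneg.2 hs1) (mul_nonneg h02 h12),
            mul_nonneg hs0 (mul_nonneg h01 h22)]
        have hminor : (c02*c12 + s*(c01*c22 - c02*c12))^2
            ≤ (c02^2 + s*(c00*c22 - c02^2)) * (c12^2 + s*(c11*c22 - c12^2)) := by
          nlinarith [mul_nonneg hs0 (mul_nonneg h22 hCR),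
            mul_nonneg (sq_nonneg s) (sub_nonneg.2 hD01)]
        have hN0 : 0 ≤ (c02^2 + s*(c00*c22 - c02^2))^(t-1) := rpow_nonneg hm0n _
        have hN1 : 0 ≤ (c02*c12 + s*(c01*c22 - c02*c12))^(t-1) := rpow_nonneg hm1n _
        have hN2 : 0 ≤ (c12^2 + s*(c11*c22 - c12^2))^(t-1) := rpow_nonneg hm2n _
        have hNminor : ((c02*c12 + s*(c01*c22 - c02*c12))^(t-1))^2
            ≤ (c02^2 + s*(c00*c22 - c02^2))^(t-1) * (c12^2 + s*(c11*c22 - c12^2))^(t-1) := by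
          rw [pow_two, ← mul_rpow hm1n hm1n, ← mul_rpow hm0n hm2n]
          refine rpow_le_rpow (mul_nonneg hm1n hm1n) ?_ ht1
          nlinarith [hminor]
        have hkey : ((c01*c22 - c02*c12)*((c02*c12 + s*(c01*c22 - c02*c12))^(t-1)))^2
            ≤ ((c00*c22 - c02^2)*((c02^2 + s*(c00*c22 - c02^2))^(t-1)))
              * ((c11*c22 - c12^2)*((c12^2 + s*(c11*c22 - c12^2))^(t-1))) := by
          have h1 := mul_le_mul hD01 hNminor (sq_nonneg _) (mul_nonneg hD00 hD11)
          nlinarith [h1]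
        have hq2 := quad2 _ _ _ (mul_nonneg hD00 hN0) (mul_nonneg hD11 hN2) hkey x0 x1
        nlinarith [mul_nonneg ht0.le hq2]
    have hle : G 0 ≤ G 1 :=
      hmono (Set.mem_Icc.2 ⟨le_refl 0, zero_le_one⟩)
        (Set.mem_Icc.2 ⟨zero_le_one, le_refl 1⟩) zero_le_one
    have hG0 : G 0 = (x0*c02^t + x1*c12^t + x2*c22^t)^2 := by
      rw [hGdef]
      simp only [zero_mul, mul_zero, add_zero]
      rw [mul_rpow h02 h12, mul_rpow h22 h22, mul_rpow h02 h22, mul_rpow h12 h22,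
        ← hsq c02 h02, ← hsq c12 h12]
      ring
    have hG1 : G 1 = c22^t * (c00^t*x0^2 + c11^t*x1^2 + c22^t*x2^2
        + 2*c01^t*(x0*x1) + 2*c02^t*(x0*x2) + 2*c12^t*(x1*x2)) := by
      rw [hGdef]
      simp only [one_mul]
      rw [show c02^2 + (c00*c22 - c02^2) = c00*c22 by ring,
        show c02*c12 + (c01*c22 - c02*c12) = c01*c22 by ring,
        show c12^2 + (c11*c22 - c12^2) = c11*c22 by ring,
        mul_rpow h00 h22, mul_rpow h01 h22, mul_rpow h11 h22,
        mul_rpow h22 h22, mul_rpow h02 h22, mul_rpow h12 h22]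
      ring
    have hc22t : (0:ℝ) < c22^t := rpow_pos_of_pos hpos t
    have h5 : 0 ≤ c22^t * (c00^t*x0^2 + c11^t*x1^2 + c22^t*x2^2
        + 2*c01^t*(x0*x1) + 2*c02^t*(x0*x2) + 2*c12^t*(x1*x2)) := by
      rw [← hG1]
      exact le_trans (hG0 ▸ sq_nonneg _) hle
    exact nonneg_of_mul_nonneg_right h5 hc22t


private lemma form_of_psd' {M : Matrix (Fin 3) (Fin 3) ℝ} (h : M.PosSemidef) (x0 x1 x2 : ℝ) :
    0 ≤ M 0 0*x0^2 + M 1 1*x1^2 + M 2 2*x2^2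
      + 2*(M 0 1)*(x0*x1) + 2*(M 0 2)*(x0*x2) + 2*(M 1 2)*(x1*x2) := by
  have hsym : ∀ i j, M j i = M i j := fun i j => by simpa using h.1.apply i j
  have h2 := h.dotProduct_mulVec_nonneg ![x0, x1, x2]
  simp [dotProduct, Matrix.mulVec, Fin.sum_univ_three] at h2
  rw [hsym 0 1, hsym 0 2, hsym 1 2] at h2
  nlinarith [h2]

private lemma psd_of_form' {M : Matrix (Fin 3) (Fin 3) ℝ} (hsym : ∀ i j, M j i = M i j)
    (h : ∀ x0 x1 x2 : ℝ, 0 ≤ M 0 0*x0^2 + M 1 1*x1^2 + M 2 2*x2^2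
      + 2*(M 0 1)*(x0*x1) + 2*(M 0 2)*(x0*x2) + 2*(M 1 2)*(x1*x2)) : M.PosSemidef := by
  apply Matrix.PosSemidef.of_dotProduct_mulVec_nonneg
  · ext i j
    simp only [Matrix.conjTranspose_apply, star_trivial]
    exact hsym i j
  · intro x
    have hx := h (x 0) (x 1) (x 2)
    simp [dotProduct, Matrix.mulVec, Fin.sum_univ_three]
    rw [hsym 0 1, hsym 0 2, hsym 1 2]
    nlinarith [hx]


/-- For a `3 × 3` real p.s.d. matrix `A` (entries of arbitrary sign), there is
`ρ ∈ [0, 1]` such that for `α ≥ 0`, `[|a_ij|^α]` is p.s.d. iff `α = 0` or `α ≥ ρ`;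
that is, `S_{|A|_∘} = {0} ∪ [ρ, ∞)`. -/
theorem abs_SA_eq_zero_union_Ici_of_three_by_three (A : Matrix (Fin 3) (Fin 3) ℝ)
    (hA : A.PosSemidef) :
    ∃ ρ ∈ Set.Icc (0 : ℝ) 1, ∀ α : ℝ, 0 ≤ α →
      ((absHadamardPower A α).PosSemidef ↔ α = 0 ∨ ρ ≤ α) := by
  classical
  have hsymA : ∀ i j, A j i = A i j := fun i j => by simpa using hA.1.apply i j
  have habs_sym : ∀ (α : ℝ) (i j : Fin 3),
      (absHadamardPower A α) j i = (absHadamardPower A α) i j := by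
    intro α i j; simp [absHadamardPower, hsymA i j]
  have hentry : ∀ (α : ℝ) (i j : Fin 3), (absHadamardPower A α) i j = |A i j| ^ α :=
    fun α i j => rfl
  have hformA := form_of_psd' hA
  have hd0 : 0 ≤ A 0 0 := by have := hformA 1 0 0; nlinarith
  have hd1 : 0 ≤ A 1 1 := by have := hformA 0 1 0; nlinarith
  have hd2 : 0 ≤ A 2 2 := by have := hformA 0 0 1; nlinarith
  have hm01 : (A 0 1)^2 ≤ A 0 0 * A 1 1 :=
    sq_le_of_quad _ _ _ (fun y z => by have := hformA y z 0; nlinarith)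
  have hm02 : (A 0 2)^2 ≤ A 0 0 * A 2 2 :=
    sq_le_of_quad _ _ _ (fun y z => by have := hformA y 0 z; nlinarith)
  have hm12 : (A 1 2)^2 ≤ A 1 1 * A 2 2 :=
    sq_le_of_quad _ _ _ (fun y z => by have := hformA 0 y z; nlinarith)
  have hdetA : 0 ≤ A.det := by
    rw [hA.1.det_eq_prod_eigenvalues]
    exact Finset.prod_nonneg fun i _ => by simpa using hA.eigenvalues_nonneg i
  have hdet3 : 0 ≤ A 0 0 * A 1 1 * A 2 2 + 2*(A 0 1*(A 0 2*A 1 2))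
      - A 0 0*(A 1 2)^2 - A 1 1*(A 0 2)^2 - A 2 2*(A 0 1)^2 := by
    rw [Matrix.det_fin_three, hsymA 0 1, hsymA 0 2, hsymA 1 2] at hdetA
    nlinarith [hdetA]
  -- PSD at `α = 0`
  have hP0 : (absHadamardPower A 0).PosSemidef := by
    apply psd_of_form' (habs_sym 0)
    intro x0 x1 x2
    simp only [hentry, rpow_zero]
    nlinarith [sq_nonneg (x0 + x1 + x2)]
  -- PSD at `α = 1`
  have hP1 : (absHadamardPower A 1).PosSemidef := by
    apply psd_of_form' (habs_sym 1)
    intro x0 x1 x2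
    simp only [hentry, rpow_one]
    apply quad3 _ _ _ _ _ _ (abs_nonneg _) (abs_nonneg _) (abs_nonneg _)
    · rw [sq_abs, abs_of_nonneg hd0, abs_of_nonneg hd1]; exact hm01
    · rw [sq_abs, abs_of_nonneg hd0, abs_of_nonneg hd2]; exact hm02
    · rw [sq_abs, abs_of_nonneg hd1, abs_of_nonneg hd2]; exact hm12
    · have habs1 : A 0 1*(A 0 2*A 1 2) ≤ |A 0 1| * (|A 0 2| * |A 1 2|) := by
        rw [← abs_mul, ← abs_mul]; exact le_abs_self _
      rw [abs_of_nonneg hd0, abs_of_nonneg hd1, abs_of_nonneg hd2, sq_abs, sq_abs, sq_abs]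
      nlinarith [hdet3, habs1]
  -- scaling by `t ≥ 1`
  have hscale : ∀ α t : ℝ, (absHadamardPower A α).PosSemidef → 1 ≤ t →
      (absHadamardPower A (α*t)).PosSemidef := by
    intro α t hα ht
    apply psd_of_form' (habs_sym _)
    intro x0 x1 x2
    have hq : ∀ y0 y1 y2 : ℝ, 0 ≤ |A 0 0|^α*y0^2 + |A 1 1|^α*y1^2 + |A 2 2|^α*y2^2
        + 2*(|A 0 1|^α)*(y0*y1) + 2*(|A 0 2|^α)*(y0*y2) + 2*(|A 1 2|^α)*(y1*y2) := by
      intro y0 y1 y2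
      have := form_of_psd' hα y0 y1 y2
      simpa only [hentry] using this
    have key := fgh3_scalar (|A 0 0|^α) (|A 0 1|^α) (|A 0 2|^α) (|A 1 1|^α) (|A 1 2|^α)
      (|A 2 2|^α) (rpow_nonneg (abs_nonneg _) _) (rpow_nonneg (abs_nonneg _) _)
      (rpow_nonneg (abs_nonneg _) _) (fun y0 y1 y2 => by nlinarith [hq y0 y1 y2]) t ht x0 x1 x2
    simp only [hentry]
    rw [rpow_mul (abs_nonneg (A 0 0)), rpow_mul (abs_nonneg (A 1 1)),
      rpow_mul (abs_nonneg (A 2 2)), rpow_mul (abs_nonneg (A 0 1)),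
      rpow_mul (abs_nonneg (A 0 2)), rpow_mul (abs_nonneg (A 1 2))]
    nlinarith [key]
  -- closedness from above
  have hlimit : ∀ ρ : ℝ, 0 < ρ → (∀ β, ρ < β → (absHadamardPower A β).PosSemidef) →
      (absHadamardPower A ρ).PosSemidef := by
    intro ρ hρ hup
    apply psd_of_form' (habs_sym ρ)
    intro x0 x1 x2
    have hrc : ∀ c : ℝ, ContinuousAt (fun β : ℝ => c ^ β) ρ :=
      fun c => continuousAt_const_rpow' hρ.ne'
    have hcont : ContinuousAt (fun β : ℝ => |A 0 0|^β*x0^2 + |A 1 1|^β*x1^2 + |A 2 2|^β*x2^2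
        + 2*(|A 0 1|^β)*(x0*x1) + 2*(|A 0 2|^β)*(x0*x2) + 2*(|A 1 2|^β)*(x1*x2)) ρ := by
      exact ((((((hrc _).mul continuousAt_const).add ((hrc _).mul continuousAt_const)).add
        ((hrc _).mul continuousAt_const)).add
        ((continuousAt_const.mul (hrc _)).mul continuousAt_const)).add
        ((continuousAt_const.mul (hrc _)).mul continuousAt_const)).add
        ((continuousAt_const.mul (hrc _)).mul continuousAt_const)
    have hev : ∀ᶠ β in nhdsWithin ρ (Set.Ioi ρ),
        0 ≤ |A 0 0|^β*x0^2 + |A 1 1|^β*x1^2 + |A 2 2|^β*x2^2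
        + 2*(|A 0 1|^β)*(x0*x1) + 2*(|A 0 2|^β)*(x0*x2) + 2*(|A 1 2|^β)*(x1*x2) := by
      filter_upwards [self_mem_nhdsWithin] with β hβ
      have := form_of_psd' (hup β hβ) x0 x1 x2
      simpa only [hentry] using this
    have h0f := ge_of_tendsto (hcont.continuousWithinAt) hev
    simpa only [hentry] using h0f
  -- assemble
  set T : Set ℝ := {α | 0 < α ∧ (absHadamardPower A α).PosSemidef} with hT
  have hTne : T.Nonempty := ⟨1, one_pos, hP1⟩
  have hTbdd : BddBelow T := ⟨0, fun β hβ => hβ.1.le⟩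
  have hρ0 : 0 ≤ sInf T := le_csInf hTne (fun β hβ => hβ.1.le)
  have hρ1 : sInf T ≤ 1 := csInf_le hTbdd ⟨one_pos, hP1⟩
  have hup : ∀ α, sInf T < α → (absHadamardPower A α).PosSemidef := by
    intro α hα
    obtain ⟨β, hβT, hβα⟩ := exists_lt_of_csInf_lt hTne hα
    have hβpos := hβT.1
    have h1t : 1 ≤ α/β := (one_le_div hβpos).2 hβα.le
    have := hscale β (α/β) hβT.2 h1t
    rwa [mul_div_cancel₀ _ hβpos.ne'] at this
  refine ⟨sInf T, ⟨hρ0, hρ1⟩, ?_⟩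
  intro α hα0
  constructor
  · intro hPSD
    rcases eq_or_lt_of_le hα0 with h0 | hpos
    · exact Or.inl h0.symm
    · exact Or.inr (csInf_le hTbdd ⟨hpos, hPSD⟩)
  · intro h
    rcases h with h0 | hρα
    · rw [h0]; exact hP0
    · rcases eq_or_lt_of_le hρα with heq | hlt
      · rcases eq_or_lt_of_le hρ0 with hz | hzpos
        · rw [← heq, ← hz]; exact hP0
        · rw [← heq]; exact hlimit _ hzpos hup
      · exact hup α hlt
end
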